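/- arXiv:1307.4155 — 5 statements merged into one kernel-verified Lean document; each statement's English description precedes it below -/
import Mathlib

section
/- For all integers n ≥ 0, the number of overpartitions of 4n+3 is congruent to 0 modulo 8. -/
/-!
Each factor is `(1 + q^k) / (1 - q^k) = 1 + 2 a_k` with `a_k = ∑_{j ≥ 1} q^{jk}`. Modulo 8,
`∏ (1 + 2 a_k) ≡ 1 + 2 S + 2 (S² - ∑ a_k²)` with `S = ∑ a_k`, and the coefficient of `q^m`
gives `p̄(m) ≡ 4 d(m) + 2 ∑_{i+j=m} d(i) d(j) - 2 σ(m) (mod 8)`. For `m ≡ 3 (mod 4)` the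
number `m` is not a square, so `d(m)` is even; pairing `d ↔ m / d` gives `4 ∣ σ(m)`, since
`d · (m / d) ≡ 3` forces `d + m / d ≡ 0 (mod 4)`; and pairing `(i, j) ↔ (j, i)` gives
`4 ∣ ∑ d(i) d(j)`, since a sum of two squares is never `3 (mod 4)`, so one of `d(i)`, `d(j)`
is even.
-/

open PowerSeries

/-- The generating function `∏_{k ≥ 1} (1 + q^k)/(1 - q^k)` for overpartitions,
realized coefficientwise via stabilized partial products. -/
noncomputable def overGF : PowerSeries ℚ :=
  PowerSeries.mk fun n => PowerSeries.coeff n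
    (∏ k ∈ Finset.range (n + 1),
      ((1 + (PowerSeries.X : PowerSeries ℚ) ^ (k + 1)) *
        (1 - (PowerSeries.X : PowerSeries ℚ) ^ (k + 1))⁻¹))

open Finset

namespace Finset

theorem exists_prod_one_add_two_mul {ι R : Type*} [CommRing R] (s : Finset ι)
    (a : ι → R) :
    ∃ F, ∏ i ∈ s, (1 + 2 * a i)
      = 1 + 2 * ∑ i ∈ s, a i + 2 * ((∑ i ∈ s, a i) ^ 2 - ∑ i ∈ s, a i ^ 2) + 8 * F := by
  -- `E` is the second elementary symmetric function of the `a i`.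
  suffices h : ∃ E F, ∏ i ∈ s, (1 + 2 * a i) = 1 + 2 * ∑ i ∈ s, a i + 4 * E + 8 * F ∧
      2 * E = (∑ i ∈ s, a i) ^ 2 - ∑ i ∈ s, a i ^ 2 by
    obtain ⟨E, F, hP, hE⟩ := h
    exact ⟨F, by linear_combination hP + 2 * hE⟩
  induction s using Finset.cons_induction with
  | empty => exact ⟨0, 0, by simp, by simp⟩
  | cons i s _ ih =>
    obtain ⟨E, F, hP, hE⟩ := ih
    refine ⟨E + a i * ∑ j ∈ s, a j, F * (1 + 2 * a i) + a i * E, ?_, ?_⟩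
    · rw [prod_cons, sum_cons, hP]
      ring
    · rw [sum_cons, sum_cons]
      linear_combination hE

theorem dvd_sum_of_involution {ι : Type*} {s : Finset ι} {f : ι → ℕ} {n : ℕ}
    (g : ι → ι) (hf : ∀ a ∈ s, n ∣ f a + f (g a)) (hg_ne : ∀ a ∈ s, g a ≠ a)
    (hg_mem : ∀ a ∈ s, g a ∈ s) (hg_inv : ∀ a ∈ s, g (g a) = a) :
    n ∣ ∑ a ∈ s, f a := by
  rw [← ZMod.natCast_eq_zero_iff, Nat.cast_sum]
  refine sum_involution (fun a _ => g a) (fun a ha => ?_) (fun a ha _ => hg_ne a ha)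
    hg_mem hg_inv
  rw [← Nat.cast_add, ZMod.natCast_eq_zero_iff]
  exact hf a ha

end Finset

namespace Nat

theorem divisors_subset_range {m N : ℕ} (hm : m < N) : m.divisors ⊆ range N :=
  fun _ hd => mem_range.mpr ((divisor_le hd).trans_lt hm)

theorem sum_divisors_div_sub_one_add_card (m : ℕ) :
    ∑ d ∈ m.divisors, (m / d - 1) + #m.divisors = ∑ d ∈ m.divisors, d := by
  rw [card_eq_sum_ones, ← sum_add_distrib]
  refine (sum_congr rfl fun d hd => ?_).trans (sum_div_divisors m id)
  exact Nat.sub_add_cancel (Nat.div_pos (divisor_le hd) (pos_of_mem_divisors hd))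

theorem not_isSquare_of_mod_four_eq_three {m : ℕ} (hm : m % 4 = 3) : ¬ IsSquare m := by
  rintro ⟨r, rfl⟩
  rw [Nat.mul_mod] at hm
  have := mod_lt r (by norm_num : 4 > 0)
  interval_cases r % 4 <;> simp_all

theorem not_isSquare_and_isSquare_of_add_mod_four_eq_three {i j : ℕ} (h : (i + j) % 4 = 3) :
    ¬ (IsSquare i ∧ IsSquare j) := by
  rintro ⟨⟨r, rfl⟩, ⟨s, rfl⟩⟩
  rw [Nat.add_mod, Nat.mul_mod, Nat.mul_mod s] at h
  have := mod_lt r (by norm_num : 4 > 0)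
  have := mod_lt s (by norm_num : 4 > 0)
  interval_cases r % 4 <;> interval_cases s % 4 <;> simp_all

theorem four_dvd_add_of_mul_mod_four_eq_three {a b : ℕ} (h : a * b % 4 = 3) : 4 ∣ a + b := by
  rw [Nat.mul_mod] at h
  rw [dvd_iff_mod_eq_zero, Nat.add_mod]
  have := mod_lt a (by norm_num : 4 > 0)
  have := mod_lt b (by norm_num : 4 > 0)
  interval_cases a % 4 <;> interval_cases b % 4 <;> simp_all

theorem dvd_sum_divisors_of_not_isSquare {m n : ℕ} {f : ℕ → ℕ} (hm : ¬ IsSquare m)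
    (hf : ∀ d ∈ m.divisors, n ∣ f d + f (m / d)) : n ∣ ∑ d ∈ m.divisors, f d := by
  refine dvd_sum_of_involution (fun d => m / d) hf (fun d hd hdd => hm ⟨d, ?_⟩)
    (fun d hd => ?_) (fun d hd => Nat.div_div_self (dvd_of_mem_divisors hd) ?_)
  · rw [← Nat.mul_div_cancel' (dvd_of_mem_divisors hd), hdd]
  · exact mem_divisors.mpr ⟨div_dvd_of_dvd (dvd_of_mem_divisors hd), (mem_divisors.mp hd).2⟩
  · exact (mem_divisors.mp hd).2

theorem even_card_divisors {m : ℕ} (hm : ¬ IsSquare m) : Even #m.divisors := by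
  rw [even_iff_two_dvd, card_eq_sum_ones]
  exact dvd_sum_divisors_of_not_isSquare hm fun _ _ => dvd_rfl

theorem four_dvd_sum_divisors {m : ℕ} (hm : m % 4 = 3) : 4 ∣ ∑ d ∈ m.divisors, d :=
  dvd_sum_divisors_of_not_isSquare (not_isSquare_of_mod_four_eq_three hm) fun d hd =>
    four_dvd_add_of_mul_mod_four_eq_three (by rwa [Nat.mul_div_cancel' (dvd_of_mem_divisors hd)])

theorem four_dvd_sum_antidiagonal_card_divisors_mul {m : ℕ} (hm : m % 4 = 3) :
    4 ∣ ∑ ij ∈ antidiagonal m, #ij.1.divisors * #ij.2.divisors := by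
  refine dvd_sum_of_involution Prod.swap (fun ij hij => ?_) (fun ij hij hswap => ?_)
    (fun ij hij => HasAntidiagonal.swap_mem_antidiagonal.mpr hij) (fun ij _ => ij.swap_swap)
  · have hij : ij.1 + ij.2 = m := mem_antidiagonal.mp hij
    obtain ⟨c, hc⟩ : Even (#ij.1.divisors * #ij.2.divisors) := by
      by_contra hodd
      rw [Nat.even_mul, not_or] at hodd
      exact not_isSquare_and_isSquare_of_add_mod_four_eq_three (hij ▸ hm)
        ⟨not_imp_comm.mp even_card_divisors hodd.1, not_imp_comm.mp even_card_divisors hodd.2⟩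
    simp only [Prod.fst_swap, Prod.snd_swap, mul_comm #ij.2.divisors, hc]
    exact ⟨c, by ring⟩
  · have hij : ij.1 + ij.2 = m := mem_antidiagonal.mp hij
    have : ij.2 = ij.1 := congrArg Prod.fst hswap
    omega

end Nat

namespace PowerSeries

variable {R : Type*} [CommRing R]

variable (R) in
noncomputable def multiplesSeries (k : ℕ) : R⟦X⟧ :=
  mk fun m => if 0 < m ∧ k ∣ m then 1 else 0

theorem coeff_multiplesSeries (k m : ℕ) :
    coeff m (multiplesSeries R k) = if k ∈ m.divisors then 1 else 0 := by
  simp only [multiplesSeries, coeff_mk, Nat.mem_divisors, Nat.pos_iff_ne_zero, and_comm]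

@[simp]
theorem multiplesSeries_zero : multiplesSeries R 0 = 0 := by
  ext m
  simp [coeff_multiplesSeries]

theorem multiplesSeries_eq_expand {k : ℕ} (hk : k ≠ 0) :
    multiplesSeries R k = expand k hk (X * mk 1) := by
  ext m
  rw [coeff_expand, multiplesSeries, coeff_mk]
  by_cases hdvd : k ∣ m
  · obtain ⟨t, rfl⟩ := hdvd
    rcases t with _ | t
    · simp
    · simp [Nat.mul_div_cancel_left _ (Nat.pos_of_ne_zero hk), coeff_succ_X_mul,
        Nat.pos_of_ne_zero hk]
  · simp [hdvd]

theorem map_multiplesSeries {S : Type*} [CommRing S] (f : R →+* S) (k : ℕ) :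
    map f (multiplesSeries R k) = multiplesSeries S k := by
  ext m
  simp only [multiplesSeries, coeff_map, coeff_mk, apply_ite f, map_one, map_zero]

theorem one_sub_X_pow_mul_multiplesSeries {k : ℕ} (hk : k ≠ 0) :
    (1 - X ^ k) * multiplesSeries R k = X ^ k := by
  rw [multiplesSeries_eq_expand hk, ← expand_X k hk, ← map_one (expand k hk), ← map_sub,
    ← map_mul, mul_left_comm, mul_comm (1 - X), mk_one_mul_one_sub_eq_one, mul_one]

theorem one_add_X_pow_mul_inv_one_sub_X_pow {K : Type*} [Field K] {k : ℕ} (hk : k ≠ 0) :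
    (1 + X ^ k) * (1 - X ^ k)⁻¹ = 1 + 2 * multiplesSeries K k := by
  rw [eq_comm, eq_mul_inv_iff_mul_eq (by simp [hk])]
  linear_combination 2 * one_sub_X_pow_mul_multiplesSeries (R := K) hk

theorem coeff_X_mul_mk_one_sq (t : ℕ) :
    coeff t ((X * mk 1 : R⟦X⟧) ^ 2) = ((t - 1 : ℕ) : R) := by
  rw [mul_pow, mk_one_pow_eq_mk_choose_add (S := R) (d := 1), coeff_X_pow_mul', coeff_mk]
  split_ifs with ht
  · rw [Nat.choose_one_right]
    congr 1
    omega
  · rw [show t - 1 = 0 by omega, Nat.cast_zero]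

theorem coeff_multiplesSeries_sq (k m : ℕ) :
    coeff m (multiplesSeries R k ^ 2)
      = if k ∈ m.divisors then ((m / k - 1 : ℕ) : R) else 0 := by
  rcases eq_or_ne k 0 with rfl | hk
  · simp
  rw [multiplesSeries_eq_expand hk, ← map_pow, coeff_expand, coeff_X_mul_mk_one_sq]
  rcases eq_or_ne m 0 with rfl | hm
  · simp
  · simp [hm]

theorem coeff_sum_multiplesSeries {m N : ℕ} (hm : m < N) :
    coeff m (∑ k ∈ range N, multiplesSeries R k) = #m.divisors := by
  simp only [map_sum, coeff_multiplesSeries, sum_ite_mem,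
    inter_eq_right.mpr (Nat.divisors_subset_range hm), sum_const, nsmul_one]

theorem coeff_sum_multiplesSeries_sq {m N : ℕ} (hm : m < N) :
    coeff m (∑ k ∈ range N, multiplesSeries R k ^ 2)
      = ((∑ d ∈ m.divisors, (m / d - 1) : ℕ) : R) := by
  simp only [map_sum, coeff_multiplesSeries_sq, sum_ite_mem,
    inter_eq_right.mpr (Nat.divisors_subset_range hm), Nat.cast_sum]

theorem coeff_sq_sum_multiplesSeries {m N : ℕ} (hm : m < N) :
    coeff m ((∑ k ∈ range N, multiplesSeries R k) ^ 2)
      = ((∑ ij ∈ antidiagonal m, #ij.1.divisors * #ij.2.divisors : ℕ) : R) := by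
  rw [sq, coeff_mul, Nat.cast_sum]
  refine sum_congr rfl fun ij hij => ?_
  have hij : ij.1 + ij.2 = m := mem_antidiagonal.mp hij
  rw [coeff_sum_multiplesSeries (by omega), coeff_sum_multiplesSeries (by omega), Nat.cast_mul]

theorem coeff_prod_one_add_two_mul_multiplesSeries_modEq {m N : ℕ} (hm0 : m ≠ 0)
    (hm : m < N) :
    coeff m (∏ k ∈ range N, (1 + 2 * multiplesSeries ℤ k))
      ≡ 4 * #m.divisors + 2 * ∑ ij ∈ antidiagonal m, #ij.1.divisors * #ij.2.divisors
        - 2 * ∑ d ∈ m.divisors, d [ZMOD 8] := by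
  obtain ⟨F, hF⟩ := exists_prod_one_add_two_mul (range N) (multiplesSeries ℤ)
  have hσ := Nat.sum_divisors_div_sub_one_add_card m
  rw [hF, Int.modEq_iff_dvd]
  simp only [← map_ofNat (C (R := ℤ)), map_add, map_sub, coeff_C_mul, coeff_one, if_neg hm0,
    coeff_sum_multiplesSeries hm, coeff_sum_multiplesSeries_sq hm, coeff_sq_sum_multiplesSeries hm]
  omega

end PowerSeries

theorem coeff_overGF (m : ℕ) :
    coeff m overGF
      = ((coeff m (∏ k ∈ range (m + 2), (1 + 2 * multiplesSeries ℤ k)) : ℤ) : ℚ) := by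
  rw [← eq_intCast (Int.castRingHom ℚ), ← coeff_map, overGF, coeff_mk]
  simp only [map_prod, map_add, map_mul, map_one, map_ofNat, map_multiplesSeries]
  rw [prod_range_succ' (fun k => 1 + 2 * multiplesSeries ℚ k) (m + 1), multiplesSeries_zero,
    mul_zero, add_zero, mul_one]
  exact congrArg (coeff m) (prod_congr rfl fun k _ =>
    one_add_X_pow_mul_inv_one_sub_X_pow k.succ_ne_zero)

/-- $\bar p(4n+3) \equiv 0 \pmod{8}$. -/
theorem overpartition_4n3_mod8
    (p : ℕ → ℕ)
    (hp : PowerSeries.mk (fun n => (p n : ℚ)) = overGF)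
    (n : ℕ) :
    p (4 * n + 3) % 8 = 0 := by
  set m := 4 * n + 3
  have hm : m % 4 = 3 := by omega
  have hpm : (p m : ℤ) = coeff m (∏ k ∈ range (m + 2), (1 + 2 * multiplesSeries ℤ k)) := by
    have h := coeff_overGF m
    rw [← hp, coeff_mk] at h
    exact_mod_cast h
  have hmod := coeff_prod_one_add_two_mul_multiplesSeries_modEq (m := m) (N := m + 2)
    (by omega) (by omega)
  rw [← hpm, Int.ModEq] at hmod
  obtain ⟨c, hc⟩ := Nat.even_card_divisors (Nat.not_isSquare_of_mod_four_eq_three hm)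
  obtain ⟨s, hs⟩ := Nat.four_dvd_sum_divisors hm
  obtain ⟨t, ht⟩ := Nat.four_dvd_sum_antidiagonal_card_divisors_mul hm
  omega
end

section
/- The generating function identity ∑_{n≥0} p̄(8n+7) qⁿ = 64 f₂²² / f₁²³ holds as an identity of formal power series, where fₘ = ∏_{k≥1} (1 − q^{mk}). -/
/-!
Write `U` for `∑ aₙ qⁿ ↦ ∑ a₂ₙ₊₁ qⁿ`; the series in question is `U³ (f₂ / f₁²)`. Since
`U (G(q²) H) = G · U H`, each application of `U` is computed by rewriting the series as a series
in `q²` times a power of `φ(q)`, using `φ = f₂⁵ / (f₁² f₄²)`, and then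
`U φ = 2 ψ(q⁴)`, `U φ² = 4 ψ(q²)²`, `U φ⁴ = 8 φ² ψ(q²)²` with `ψ = f₂² / f₁`. This passes through
`∑ p̄(2n+1) qⁿ = 2 f₂² f₈² / (f₁⁴ f₄)` and `∑ p̄(4n+3) qⁿ = 8 f₂ f₄⁶ / f₁⁸`.

The product for `φ` is the limit of the finite Jacobi triple product
`(∏_{k<n} (1 + q^(2k+1)))² = ∑_j [2n, j]_{q²} q^((j-n)²)`, a case of the `q`-binomial theorem,
together with `∏ (1 + q^(2k+1)) = f₂² / (f₁ f₄)`. The identity `ψ(q)² = φ(q) ψ(q²)` counts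
representations `T a + T b = k² + 2 T j` by triangular numbers, and it makes `ψ f₁` and `f₂²`
solutions of `w² f₄² = f₂⁴ w(q²)` with the same constant term, hence equal. Finally
`φ(q)² = φ(q²)² + 4 q ψ(q⁴)²`, needed for `U φ⁴`, holds because the difference `D` of the two
sides satisfies `D = -D(q²)`.
-/

open PowerSeries

/-- `f m` is the eta-type product `(q^m; q^m)_∞ = ∏_{k ≥ 1} (1 - q^{m k})`,
realized as a formal power series over ℚ: its `n`-th coefficient is that of the
stabilized partial product. -/
noncomputable def f (m : ℕ) : PowerSeries ℚ :=
  PowerSeries.mk fun n => PowerSeries.coeff (R := ℚ) n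
    (∏ k ∈ Finset.range (n + 1), (1 - (PowerSeries.X : PowerSeries ℚ) ^ (m * (k + 1))))

namespace Overpartition

open Finset

local notation "E₂" => PowerSeries.expand 2 two_ne_zero

section Stabilization

variable {R : Type*} [CommRing R]

def StabilizesTo (F : ℕ → R⟦X⟧) (G : R⟦X⟧) : Prop :=
  ∀ d N, d < N → coeff d (F N) = coeff d G

namespace StabilizesTo

variable {F F' : ℕ → R⟦X⟧} {G G' : R⟦X⟧}

theorem unique (h : StabilizesTo F G) (h' : StabilizesTo F G') : G = G' :=
  ext fun d => (h d _ d.lt_succ_self).symm.trans (h' d _ d.lt_succ_self)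

theorem const (G : R⟦X⟧) : StabilizesTo (fun _ => G) G := fun _ _ _ => rfl

theorem add (h : StabilizesTo F G) (h' : StabilizesTo F' G') :
    StabilizesTo (fun N => F N + F' N) (G + G') := fun d N hd => by
  simp only [map_add, h d N hd, h' d N hd]

theorem mul (h : StabilizesTo F G) (h' : StabilizesTo F' G') :
    StabilizesTo (fun N => F N * F' N) (G * G') := fun d N hd => by
  simp only [coeff_mul]
  refine sum_congr rfl fun p hp => ?_
  have := mem_antidiagonal.mp hp
  rw [h _ N (by omega), h' _ N (by omega)]

theorem comp {m : ℕ → ℕ} (h : StabilizesTo F G) (hm : ∀ N, N ≤ m N) :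
    StabilizesTo (fun N => F (m N)) G := fun d N hd => h d _ (hd.trans_le (hm N))

theorem expand (m : ℕ) (hm : m ≠ 0) (h : StabilizesTo F G) :
    StabilizesTo (fun N => expand m hm (F N)) (expand m hm G) := fun d N hd => by
  simp only [coeff_expand]
  split_ifs
  · exact h _ N ((Nat.div_le_self d m).trans_lt hd)
  · rfl

end StabilizesTo

noncomputable def limit (F : ℕ → R⟦X⟧) : R⟦X⟧ := mk fun n => coeff n (F (n + 1))

theorem stabilizesTo_limit {F : ℕ → R⟦X⟧} (hF : ∀ N, X ^ N ∣ F (N + 1) - F N) :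
    StabilizesTo F (limit F) := by
  have step : ∀ d N, d < N → coeff d (F (N + 1)) = coeff d (F N) := fun d N hd => by
    rw [← sub_eq_zero, ← map_sub]
    exact X_pow_dvd_iff.mp (hF N) d hd
  intro d N hd
  rw [limit, coeff_mk]
  induction N, hd using Nat.le_induction with
  | base => rfl
  | succ N hN ih => rw [step d N hN, ih]

theorem stabilizesTo_limit_sum {u : ℕ → R⟦X⟧} (hu : ∀ k, X ^ k ∣ u k) :
    StabilizesTo (fun N => ∑ k ∈ range N, u k) (limit fun N => ∑ k ∈ range N, u k) :=
  stabilizesTo_limit fun N => by simpa [sum_range_succ] using hu N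

theorem stabilizesTo_limit_prod {v : ℕ → R⟦X⟧} (hv : ∀ k, X ^ k ∣ v k - 1) :
    StabilizesTo (fun N => ∏ k ∈ range N, v k) (limit fun N => ∏ k ∈ range N, v k) :=
  stabilizesTo_limit fun N => by
    rw [prod_range_succ, ← mul_sub_one]
    exact (hv N).mul_left _

end Stabilization

section EvenOdd

variable {R : Type*} [CommRing R]

noncomputable def evenPart (F : R⟦X⟧) : R⟦X⟧ := mk fun n => coeff (2 * n) F

noncomputable def oddPart (F : R⟦X⟧) : R⟦X⟧ := mk fun n => coeff (2 * n + 1) F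

theorem coeff_expand_two_odd (A : R⟦X⟧) (n : ℕ) : coeff (2 * n + 1) (E₂ A) = 0 :=
  coeff_expand_of_not_dvd _ _ _ (by omega)

theorem coeff_X_mul_expand_two_even (B : R⟦X⟧) (n : ℕ) : coeff (2 * n) (X * E₂ B) = 0 := by
  cases n with
  | zero => simp
  | succ n => rw [show 2 * (n + 1) = 2 * n + 1 + 1 by ring, coeff_succ_X_mul, coeff_expand_two_odd]

theorem expand_evenPart_add_X_mul_expand_oddPart (F : R⟦X⟧) :
    E₂ (evenPart F) + X * E₂ (oddPart F) = F := by
  ext n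
  obtain ⟨m, rfl | rfl⟩ := Nat.even_or_odd' n
  · simp [coeff_X_mul_expand_two_even, evenPart]
  · simp [coeff_expand_two_odd, oddPart]

theorem evenPart_expand_add_X_mul_expand (A B : R⟦X⟧) : evenPart (E₂ A + X * E₂ B) = A := by
  ext n
  simp [evenPart, coeff_X_mul_expand_two_even]

theorem oddPart_expand_add_X_mul_expand (A B : R⟦X⟧) : oddPart (E₂ A + X * E₂ B) = B := by
  ext n
  simp [oddPart, coeff_expand_two_odd]

theorem oddPart_expand_mul (W G : R⟦X⟧) : oddPart (E₂ W * G) = W * oddPart G := by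
  conv_lhs => rw [← expand_evenPart_add_X_mul_expand_oddPart G]
  rw [← oddPart_expand_add_X_mul_expand (W * evenPart G) (W * oddPart G)]
  congr 1
  simp only [map_mul]
  ring

theorem sq_eq_expand_add_X_mul_expand (F : R⟦X⟧) :
    F ^ 2 = E₂ (evenPart F ^ 2 + X * oddPart F ^ 2)
      + X * E₂ (2 * evenPart F * oddPart F) := by
  conv_lhs => rw [← expand_evenPart_add_X_mul_expand_oddPart F]
  simp only [map_add, map_mul, map_pow, map_ofNat, expand_X]
  ring

theorem evenPart_sq (F : R⟦X⟧) : evenPart (F ^ 2) = evenPart F ^ 2 + X * oddPart F ^ 2 := by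
  rw [sq_eq_expand_add_X_mul_expand, evenPart_expand_add_X_mul_expand]

theorem oddPart_sq (F : R⟦X⟧) : oddPart (F ^ 2) = 2 * evenPart F * oddPart F := by
  rw [sq_eq_expand_add_X_mul_expand, oddPart_expand_add_X_mul_expand]

theorem mul_oddPart_eq_of_mul_expand_eq {G H A B : R⟦X⟧} (h : G * E₂ A = H * E₂ B) :
    A * oddPart G = B * oddPart H := by
  simpa only [mul_comm _ (E₂ _), oddPart_expand_mul] using congrArg oddPart h

theorem eq_zero_of_eq_neg_expand_two [IsAddTorsionFree R] {F : R⟦X⟧} (h : F = -E₂ F) :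
    F = 0 := by
  ext n
  induction n using Nat.strong_induction_on with
  | _ n ih =>
  have hn := congrArg (coeff n) h
  rw [map_neg, coeff_expand] at hn
  split_ifs at hn with h2
  · obtain ⟨m, rfl⟩ := h2
    rcases Nat.eq_zero_or_pos m with rfl | hm
    · exact self_eq_neg.mp (by simpa using hn)
    · simpa [hn] using ih m (by omega)
  · simpa using hn

theorem eq_of_sq_mul_eq_mul_expand [NoZeroDivisors R] {w v A B : R⟦X⟧} (hw : w ^ 2 * A = B * E₂ w)
    (hv : v ^ 2 * A = B * E₂ v) (h0 : constantCoeff w = constantCoeff v)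
    (hc : constantCoeff ((w + v) * A) ≠ 0) : w = v := by
  have hD : (w - v) * ((w + v) * A) = B * E₂ (w - v) := by
    rw [map_sub]
    linear_combination hw - hv
  have hpos : 1 ≤ (w - v).order := one_le_order_iff_constCoeff_eq_zero.mpr (by simp [h0])
  have hc0 : ((w + v) * A).order = 0 := not_not.mp (mt order_ne_zero_iff_constCoeff_eq_zero.mp hc)
  have horder := congrArg order hD
  rw [order_mul (w - v), hc0, add_zero, order_mul B, order_expand] at horder
  rw [← sub_eq_zero, ← order_eq_top]
  generalize (w - v).order = n at horder hpos ⊢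
  generalize B.order = b at horder
  induction n using ENat.recTopCoe with
  | top => rfl
  | coe n =>
    induction b using ENat.recTopCoe with
    | top => simp at horder
    | coe b =>
      rw [nsmul_eq_mul] at horder
      norm_cast at horder hpos
      omega

end EvenOdd

section EtaProducts

theorem stabilizesTo_f {m : ℕ} (hm : m ≠ 0) :
    StabilizesTo (fun N => ∏ k ∈ range N, (1 - X ^ (m * (k + 1)) : ℚ⟦X⟧)) (f m) :=
  stabilizesTo_limit_prod fun k => by
    simpa using (pow_dvd_pow (X : ℚ⟦X⟧) (by nlinarith [Nat.pos_of_ne_zero hm] :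
      k ≤ m * (k + 1))).neg_right

theorem constantCoeff_f {m : ℕ} (hm : m ≠ 0) : constantCoeff (f m) = 1 := by
  simpa [f] using hm

theorem f_ne_zero {m : ℕ} (hm : m ≠ 0) : f m ≠ 0 := fun h => by
  simpa [h] using constantCoeff_f hm

theorem expand_f {m k : ℕ} (hm : m ≠ 0) (hk : k ≠ 0) : expand m hm (f k) = f (m * k) := by
  refine ((stabilizesTo_f hk).expand m hm).unique ?_
  simpa [map_prod, mul_assoc, ← pow_mul] using stabilizesTo_f (mul_ne_zero hm hk)

noncomputable def prodOneAddX : ℚ⟦X⟧ := limit fun N => ∏ k ∈ range N, (1 + X ^ (k + 1))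

noncomputable def prodOneAddXOdd : ℚ⟦X⟧ := limit fun N => ∏ k ∈ range N, (1 + X ^ (2 * k + 1))

theorem stabilizesTo_prodOneAddX :
    StabilizesTo (fun N => ∏ k ∈ range N, (1 + X ^ (k + 1))) prodOneAddX :=
  stabilizesTo_limit_prod fun k => by simpa using pow_dvd_pow X k.le_succ

theorem stabilizesTo_prodOneAddXOdd :
    StabilizesTo (fun N => ∏ k ∈ range N, (1 + X ^ (2 * k + 1))) prodOneAddXOdd :=
  stabilizesTo_limit_prod fun k => by simpa using pow_dvd_pow X (by omega : k ≤ 2 * k + 1)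

theorem f_one_mul_prodOneAddX : f 1 * prodOneAddX = f 2 := by
  refine ((stabilizesTo_f one_ne_zero).mul stabilizesTo_prodOneAddX).unique ?_
  convert stabilizesTo_f two_ne_zero using 2 with N
  rw [← prod_mul_distrib]
  refine prod_congr rfl fun k _ => ?_
  ring

theorem expand_prodOneAddX_mul_prodOneAddXOdd : E₂ prodOneAddX * prodOneAddXOdd = prodOneAddX := by
  have split : ∀ N, E₂ (∏ k ∈ range N, (1 + X ^ (k + 1))) * ∏ k ∈ range N, (1 + X ^ (2 * k + 1))
      = ∏ k ∈ range (2 * N), (1 + (X : ℚ⟦X⟧) ^ (k + 1)) := fun N => by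
    induction N with
    | zero => simp
    | succ N ih =>
      rw [show 2 * (N + 1) = 2 * N + 1 + 1 by ring, prod_range_succ _ (2 * N + 1),
        prod_range_succ _ (2 * N), ← ih]
      simp only [prod_range_succ, map_mul, map_add, map_one, map_pow, expand_X]
      ring
  refine ((stabilizesTo_prodOneAddX.expand 2 two_ne_zero).mul stabilizesTo_prodOneAddXOdd).unique ?_
  simp only [split]
  exact stabilizesTo_prodOneAddX.comp fun N => by omega

theorem prodOneAddXOdd_mul_f_one_mul_f_four : prodOneAddXOdd * f 1 * f 4 = f 2 ^ 2 := by
  have h4 : f 4 = f 2 * E₂ prodOneAddX := by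
    simpa [expand_f] using congrArg E₂ f_one_mul_prodOneAddX.symm
  rw [h4]
  linear_combination (f 1 * f 2) * expand_prodOneAddX_mul_prodOneAddXOdd + f 2 * f_one_mul_prodOneAddX

end EtaProducts

section TriangularNumbers

def tri (k : ℕ) : ℕ := k * (k + 1) / 2

theorem two_mul_tri (k : ℕ) : 2 * tri k = k * (k + 1) := by
  have := (Nat.even_mul_succ_self k).two_dvd
  unfold tri
  omega

theorem le_tri (k : ℕ) : k ≤ tri k := by
  nlinarith [two_mul_tri k]

def triPairOfSqTri (p : ℕ × ℕ) : ℕ × ℕ :=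
  if p.1 ≤ p.2 then (p.2 + p.1, p.2 - p.1) else (p.1 + p.2, p.1 - p.2 - 1)

def sqTriOfTriPair (p : ℕ × ℕ) : ℕ × ℕ :=
  if (p.1 + p.2) % 2 = 0 then ((p.1 - p.2) / 2, (p.1 + p.2) / 2)
  else ((p.1 + p.2 + 1) / 2, (p.1 - p.2 - 1) / 2)

theorem tri_add_tri_triPairOfSqTri (p : ℕ × ℕ) :
    tri (triPairOfSqTri p).1 + tri (triPairOfSqTri p).2 = p.1 ^ 2 + 2 * tri p.2 := by
  obtain ⟨k, j⟩ := p
  unfold triPairOfSqTri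
  dsimp only
  split_ifs with h
  · obtain ⟨t, rfl⟩ := Nat.exists_eq_add_of_le h
    simp only [Nat.add_sub_cancel_left]
    linarith [two_mul_tri (k + t + k), two_mul_tri t, two_mul_tri (k + t)]
  · obtain ⟨t, rfl⟩ := Nat.exists_eq_add_of_lt (not_le.mp h)
    simp only [show j + t + 1 - j - 1 = t by omega]
    linarith [two_mul_tri (j + t + 1 + j), two_mul_tri t, two_mul_tri j]

theorem triPairOfSqTri_snd_le_fst (p : ℕ × ℕ) : (triPairOfSqTri p).2 ≤ (triPairOfSqTri p).1 := by
  unfold triPairOfSqTri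
  split_ifs <;> simp only <;> omega

theorem sqTriOfTriPair_triPairOfSqTri (p : ℕ × ℕ) : sqTriOfTriPair (triPairOfSqTri p) = p := by
  unfold sqTriOfTriPair triPairOfSqTri
  split_ifs <;> simp only [Prod.ext_iff] <;> omega

theorem triPairOfSqTri_sqTriOfTriPair {p : ℕ × ℕ} (h : p.2 ≤ p.1) :
    triPairOfSqTri (sqTriOfTriPair p) = p := by
  unfold sqTriOfTriPair triPairOfSqTri
  split_ifs <;> simp only [Prod.ext_iff] at * <;> omega

theorem card_le_tri_add_tri_eq_card_sq_add_two_mul_tri {d N : ℕ} (hd : d < N) :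
    #{p ∈ range N ×ˢ range N | p.2 ≤ p.1 ∧ tri p.1 + tri p.2 = d}
      = #{p ∈ range N ×ˢ range N | p.1 ^ 2 + 2 * tri p.2 = d} := by
  refine card_nbij' sqTriOfTriPair triPairOfSqTri ?_ ?_ ?_ ?_
  · intro p hp
    simp only [coe_filter, Set.mem_ofPred_eq, mem_product, mem_range] at hp ⊢
    have := tri_add_tri_triPairOfSqTri (sqTriOfTriPair p)
    rw [triPairOfSqTri_sqTriOfTriPair hp.2.1] at this
    have := Nat.le_self_pow two_ne_zero (sqTriOfTriPair p).1
    have := le_tri (sqTriOfTriPair p).2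
    omega
  · intro p hp
    simp only [coe_filter, Set.mem_ofPred_eq, mem_product, mem_range] at hp ⊢
    have := tri_add_tri_triPairOfSqTri p
    have := triPairOfSqTri_snd_le_fst p
    have := le_tri (triPairOfSqTri p).1
    have := le_tri (triPairOfSqTri p).2
    omega
  · intro p hp
    exact triPairOfSqTri_sqTriOfTriPair (mem_filter.mp hp).2.1
  · intro p _
    exact sqTriOfTriPair_triPairOfSqTri p

theorem card_tri_add_tri_add_card_two_mul_tri {d N : ℕ} (hd : d < N) :
    #{p ∈ range N ×ˢ range N | tri p.1 + tri p.2 = d} + #{j ∈ range N | 2 * tri j = d}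
      = 2 * #{p ∈ range N ×ˢ range N | p.1 ^ 2 + 2 * tri p.2 = d} := by
  have below := card_le_tri_add_tri_eq_card_sq_add_two_mul_tri hd
  have swap : #{p ∈ range N ×ˢ range N | p.1 ≤ p.2 ∧ tri p.1 + tri p.2 = d}
      = #{p ∈ range N ×ˢ range N | p.2 ≤ p.1 ∧ tri p.1 + tri p.2 = d} := by
    refine card_nbij' Prod.swap Prod.swap ?_ ?_ (fun _ _ => rfl) (fun _ _ => rfl) <;>
    · intro p hp
      simp only [coe_filter, Set.mem_ofPred_eq, mem_product, mem_range, Prod.fst_swap,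
        Prod.snd_swap] at hp ⊢
      omega
  have diag : #{p ∈ range N ×ˢ range N | p.1 = p.2 ∧ tri p.1 + tri p.2 = d}
      = #{j ∈ range N | 2 * tri j = d} := by
    refine card_nbij' Prod.fst (fun j => (j, j)) ?_ ?_ ?_ (fun _ _ => rfl)
    · rintro ⟨a, b⟩ hp
      simp only [coe_filter, Set.mem_ofPred_eq, mem_product, mem_range] at hp ⊢
      obtain ⟨⟨ha, -⟩, rfl, rfl⟩ := hp
      omega
    · intro j hj
      simp only [coe_filter, Set.mem_ofPred_eq, mem_product, mem_range, true_and] at hj ⊢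
      omega
    · intro p hp
      simp only [coe_filter, Set.mem_ofPred_eq] at hp
      exact Prod.ext rfl hp.2.1
  have split_le : #{p ∈ range N ×ˢ range N | tri p.1 + tri p.2 = d}
      = #{p ∈ range N ×ˢ range N | p.2 ≤ p.1 ∧ tri p.1 + tri p.2 = d}
        + #{p ∈ range N ×ˢ range N | p.1 < p.2 ∧ tri p.1 + tri p.2 = d} := by
    rw [← card_filter_add_card_filter_not (fun p : ℕ × ℕ => p.2 ≤ p.1), filter_filter,
      filter_filter]
    congr 2 <;> exact filter_congr fun _ _ => by omega
  have split_eq : #{p ∈ range N ×ˢ range N | p.1 ≤ p.2 ∧ tri p.1 + tri p.2 = d}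
      = #{p ∈ range N ×ˢ range N | p.1 < p.2 ∧ tri p.1 + tri p.2 = d}
        + #{p ∈ range N ×ˢ range N | p.1 = p.2 ∧ tri p.1 + tri p.2 = d} := by
    rw [← card_filter_add_card_filter_not (fun p : ℕ × ℕ => p.1 < p.2), filter_filter,
      filter_filter]
    congr 2 <;> exact filter_congr fun _ _ => by omega
  omega

end TriangularNumbers

section Theta

section Coefficients

variable {R : Type*} [CommRing R]

theorem coeff_sum_X_pow {ι : Type*} (s : Finset ι) (e : ι → ℕ) (d : ℕ) :
    coeff d (∑ i ∈ s, (X : R⟦X⟧) ^ e i) = #{i ∈ s | e i = d} := by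
  simp [coeff_X_pow, sum_boole, eq_comm]

theorem coeff_sum_X_pow_mul_sum_X_pow {ι κ : Type*} (s : Finset ι) (t : Finset κ) (e : ι → ℕ)
    (e' : κ → ℕ) (d : ℕ) :
    coeff d ((∑ i ∈ s, (X : R⟦X⟧) ^ e i) * ∑ j ∈ t, (X : R⟦X⟧) ^ e' j)
      = #{p ∈ s ×ˢ t | e p.1 + e' p.2 = d} := by
  rw [sum_mul_sum, ← sum_product', ← coeff_sum_X_pow (R := R)]
  simp only [pow_add]

end Coefficients

noncomputable def squareSum : ℚ⟦X⟧ := limit fun N => ∑ k ∈ range N, X ^ (k ^ 2)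

/-- Ramanujan's `φ(q) = ∑_{k ∈ ℤ} q ^ (k ^ 2)`. -/
noncomputable def phi : ℚ⟦X⟧ := 2 * squareSum - 1

noncomputable def psi : ℚ⟦X⟧ := limit fun N => ∑ k ∈ range N, X ^ tri k

theorem stabilizesTo_squareSum :
    StabilizesTo (fun N => ∑ k ∈ range N, X ^ (k ^ 2)) squareSum :=
  stabilizesTo_limit_sum fun k => pow_dvd_pow X (Nat.le_self_pow two_ne_zero k)

theorem stabilizesTo_psi : StabilizesTo (fun N => ∑ k ∈ range N, X ^ tri k) psi :=
  stabilizesTo_limit_sum fun k => pow_dvd_pow X (le_tri k)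

theorem squareSum_eq_expand_add : squareSum = E₂ (E₂ squareSum) + X * E₂ (E₂ (E₂ psi)) := by
  have split : ∀ N, ∑ k ∈ range (2 * N), (X : ℚ⟦X⟧) ^ (k ^ 2)
      = E₂ (E₂ (∑ k ∈ range N, X ^ (k ^ 2))) + X * E₂ (E₂ (E₂ (∑ k ∈ range N, X ^ tri k))) :=
    fun N => by
    induction N with
    | zero => simp
    | succ N ih =>
      have hodd : (2 * N + 1) ^ 2 = 2 * (2 * (2 * tri N)) + 1 := by nlinarith [two_mul_tri N]
      rw [show 2 * (N + 1) = 2 * N + 1 + 1 by ring, sum_range_succ, sum_range_succ, ih, hodd]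
      simp only [sum_range_succ, map_add, map_pow, expand_X, ← pow_mul]
      ring
  refine (stabilizesTo_squareSum.comp (m := (2 * ·)) fun N => by omega).unique ?_
  simp only [split]
  exact ((stabilizesTo_squareSum.expand 2 _).expand 2 _).add
    ((StabilizesTo.const X).mul (((stabilizesTo_psi.expand 2 _).expand 2 _).expand 2 _))

theorem phi_eq_expand_add : phi = E₂ (E₂ phi) + X * E₂ (2 * E₂ (E₂ psi)) := by
  conv_lhs => rw [phi, squareSum_eq_expand_add]
  simp only [phi, map_sub, map_mul, map_ofNat, map_one]
  ring

theorem evenPart_phi : evenPart phi = E₂ phi := by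
  rw [phi_eq_expand_add, evenPart_expand_add_X_mul_expand, ← phi_eq_expand_add]

theorem oddPart_phi : oddPart phi = 2 * E₂ (E₂ psi) := by
  rw [phi_eq_expand_add, oddPart_expand_add_X_mul_expand]

theorem psi_sq : psi ^ 2 = phi * E₂ psi := by
  have hE : ∀ N, E₂ (∑ k ∈ range N, (X : ℚ⟦X⟧) ^ tri k) = ∑ k ∈ range N, X ^ (2 * tri k) :=
    fun N => by simp [map_sum, ← pow_mul]
  have hL := (stabilizesTo_psi.mul stabilizesTo_psi).add (stabilizesTo_psi.expand 2 two_ne_zero)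
  have hS := stabilizesTo_squareSum.mul (stabilizesTo_psi.expand 2 two_ne_zero)
  have hR := hS.add hS
  suffices h : psi * psi + E₂ psi = squareSum * E₂ psi + squareSum * E₂ psi by
    rw [phi]
    linear_combination h
  ext d
  rw [← hL d (d + 1) d.lt_succ_self, ← hR d (d + 1) d.lt_succ_self]
  simp only [map_add, hE, coeff_sum_X_pow_mul_sum_X_pow, coeff_sum_X_pow]
  exact_mod_cast (card_tri_add_tri_add_card_two_mul_tri d.lt_succ_self).trans (two_mul _)

end Theta

section QBinomial

variable {R : Type*} [CommRing R]

def qBinom (t : R) : ℕ → ℕ → R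
  | _, 0 => 1
  | 0, _ + 1 => 0
  | n + 1, k + 1 => qBinom t n k + t ^ (k + 1) * qBinom t n (k + 1)

def qPoch (t : R) (n : ℕ) : R := ∏ k ∈ range n, (1 - t ^ (k + 1))

variable (t : R)

@[simp] theorem qBinom_zero_right (n : ℕ) : qBinom t n 0 = 1 := by
  cases n <;> rfl

theorem qBinom_succ_succ (n k : ℕ) :
    qBinom t (n + 1) (k + 1) = qBinom t n k + t ^ (k + 1) * qBinom t n (k + 1) := rfl

theorem qBinom_eq_zero_of_lt {n k : ℕ} (h : n < k) : qBinom t n k = 0 := by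
  induction n generalizing k with
  | zero => obtain ⟨k, rfl⟩ := Nat.exists_eq_succ_of_ne_zero h.ne'; rfl
  | succ n ih =>
    obtain ⟨k, rfl⟩ := Nat.exists_eq_succ_of_ne_zero (by omega : k ≠ 0)
    rw [qBinom_succ_succ, ih (by omega), ih (by omega), mul_zero, add_zero]

theorem one_sub_pow_mul_qBinom (n k : ℕ) :
    (1 - t ^ (n - k)) * qBinom t n k = (1 - t ^ (k + 1)) * qBinom t n (k + 1) := by
  induction n generalizing k with
  | zero => cases k <;> simp [qBinom]
  | succ n ih =>
    cases k with
    | zero =>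
      have ih0 := ih 0
      simp only [qBinom_succ_succ, qBinom_zero_right, Nat.sub_zero, mul_one, zero_add, pow_one]
        at ih0 ⊢
      linear_combination t * ih0
    | succ k =>
      rcases lt_or_ge k n with hk | hk
      · obtain ⟨m, rfl⟩ := Nat.exists_eq_add_of_lt hk
        have ih1 := ih k
        have ih2 := ih (k + 1)
        rw [show k + m + 1 - k = m + 1 by omega] at ih1
        rw [show k + m + 1 - (k + 1) = m by omega] at ih2
        rw [qBinom_succ_succ t _ k, qBinom_succ_succ t _ (k + 1),
          show k + m + 1 + 1 - (k + 1) = m + 1 by omega]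
        linear_combination ih1 + t ^ (k + 1 + 1) * ih2
      · rw [qBinom_eq_zero_of_lt t (by omega : n + 1 < k + 1 + 1),
          show n + 1 - (k + 1) = 0 by omega]
        simp

theorem qBinom_mul_qPoch_mul_qPoch {n k : ℕ} (h : k ≤ n) :
    qBinom t n k * qPoch t k * qPoch t (n - k) = qPoch t n := by
  induction k with
  | zero => simp [qPoch]
  | succ k ih =>
    obtain ⟨m, hm⟩ : ∃ m, n - k = m + 1 := ⟨n - k - 1, by omega⟩
    have hpoch : qPoch t (n - k) = qPoch t (n - (k + 1)) * (1 - t ^ (n - k)) := by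
      rw [hm, show n - (k + 1) = m by omega, qPoch, prod_range_succ, ← qPoch]
    rw [← ih (by omega), hpoch, qPoch, prod_range_succ, ← qPoch]
    linear_combination (qPoch t k * qPoch t (n - (k + 1))) * (one_sub_pow_mul_qBinom t n k).symm

theorem choose_two_succ (j : ℕ) : (j + 1).choose 2 = j.choose 2 + j := by
  rw [Nat.choose_succ_succ, Nat.choose_one_right, add_comm]

theorem prod_add_mul_pow_eq_sum_qBinom (m : ℕ) (x y : R) :
    ∏ k ∈ range m, (y + x * t ^ k)
      = ∑ j ∈ range (m + 1), qBinom t m j * t ^ j.choose 2 * x ^ j * y ^ (m - j) := by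
  induction m generalizing x with
  | zero => simp
  | succ m ih =>
    set E : ℕ → R := fun j => qBinom t m j * t ^ (j.choose 2 + j) * x ^ j * y ^ (m + 1 - j)
    have hE : ∑ j ∈ range (m + 1), E j = ∑ j ∈ range (m + 1), E (j + 1) + y ^ (m + 1) := by
      have hlast : E (m + 1) = 0 := by simp [E, qBinom_eq_zero_of_lt]
      have := sum_range_succ' E (m + 1)
      rw [sum_range_succ, hlast, add_zero] at this
      simpa [E] using this
    calc ∏ k ∈ range (m + 1), (y + x * t ^ k)
        = (∏ k ∈ range m, (y + x * t * t ^ k)) * (y + x) := by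
          rw [prod_range_succ']
          simp only [pow_succ, pow_zero, mul_one, mul_assoc, mul_comm t]
      _ = ∑ j ∈ range (m + 1), E j
            + ∑ j ∈ range (m + 1), qBinom t m j * t ^ (j + 1).choose 2 * x ^ (j + 1) * y ^ (m - j) := by
          rw [ih, sum_mul, ← sum_add_distrib]
          refine sum_congr rfl fun j hj => ?_
          simp only [E]
          rw [show m + 1 - j = m - j + 1 by have := mem_range.mp hj; omega, choose_two_succ]
          ring
      _ = ∑ j ∈ range (m + 1 + 1), qBinom t (m + 1) j * t ^ j.choose 2 * x ^ j * y ^ (m + 1 - j) := by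
          rw [hE, sum_range_succ' _ (m + 1)]
          simp only [qBinom_succ_succ, E, choose_two_succ]
          simp only [Nat.add_sub_add_right, qBinom_zero_right, Nat.choose_zero_succ, pow_zero,
            Nat.sub_zero, mul_one, one_mul, add_mul, sum_add_distrib]
          rw [sum_congr rfl fun j _ => (by ring : t ^ (j + 1) * qBinom t m (j + 1)
            * t ^ (j.choose 2 + j) * x ^ (j + 1) * y ^ (m - j) = qBinom t m (j + 1)
            * t ^ (j.choose 2 + j + (j + 1)) * x ^ (j + 1) * y ^ (m - j))]
          ring

theorem two_mul_choose_two_add_self (j : ℕ) : 2 * j.choose 2 + j = j ^ 2 := by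
  induction j with
  | zero => rfl
  | succ j ih => rw [choose_two_succ]; nlinarith

theorem two_mul_choose_two_add_add_mul_sub {n j : ℕ} (hj : j ≤ 2 * n) :
    2 * j.choose 2 + j + 2 * n * (2 * n - j) = n.dist j ^ 2 + 3 * n ^ 2 := by
  have h := two_mul_choose_two_add_self j
  rcases le_total j n with hjn | hnj
  · obtain ⟨a, rfl⟩ := Nat.exists_eq_add_of_le hjn
    rw [Nat.dist_eq_sub_of_le_right hjn, show 2 * (j + a) - j = j + 2 * a by omega,
      Nat.add_sub_cancel_left]
    nlinarith
  · obtain ⟨a, rfl⟩ := Nat.exists_eq_add_of_le hnj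
    obtain ⟨b, rfl⟩ := Nat.exists_eq_add_of_le (by omega : a ≤ n)
    rw [Nat.dist_eq_sub_of_le hnj, show 2 * (a + b) - (a + b + a) = b by omega,
      Nat.add_sub_cancel_left]
    nlinarith

theorem prod_pow_two_mul_add_one (q : R) (n : ℕ) : ∏ k ∈ range n, q ^ (2 * k + 1) = q ^ (n ^ 2) := by
  induction n with
  | zero => simp
  | succ n ih => rw [prod_range_succ, ih]; ring

theorem sq_prod_one_add_pow_odd [NoZeroDivisors R] {q : R} (hq : q ≠ 0) (n : ℕ) :
    (∏ k ∈ range n, (1 + q ^ (2 * k + 1))) ^ 2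
      = ∑ j ∈ range (2 * n + 1), qBinom (q ^ 2) (2 * n) j * q ^ (n.dist j ^ 2) := by
  have rothe := prod_add_mul_pow_eq_sum_qBinom (q ^ 2) (2 * n) q (q ^ (2 * n))
  have lhs : ∏ k ∈ range (2 * n), (q ^ (2 * n) + q * (q ^ 2) ^ k)
      = q ^ (3 * n ^ 2) * (∏ k ∈ range n, (1 + q ^ (2 * k + 1))) ^ 2 := by
    rw [two_mul, prod_range_add]
    have low : ∏ k ∈ range n, (q ^ (n + n) + q * (q ^ 2) ^ k)
        = ∏ k ∈ range n, (q ^ (2 * k + 1) * (1 + q ^ (2 * (n - 1 - k) + 1))) :=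
      prod_congr rfl fun k hk => by
        rw [show n + n = 2 * k + 1 + (2 * (n - 1 - k) + 1) by have := mem_range.mp hk; omega]
        ring
    have high : ∏ k ∈ range n, (q ^ (n + n) + q * (q ^ 2) ^ (n + k))
        = ∏ k ∈ range n, (q ^ (2 * n) * (1 + q ^ (2 * k + 1))) :=
      prod_congr rfl fun k _ => by ring
    rw [low, high, prod_mul_distrib, prod_mul_distrib, prod_pow_two_mul_add_one,
      prod_range_reflect (fun k => 1 + q ^ (2 * k + 1)), prod_const, card_range]
    ring
  have rhs : ∀ j ∈ range (2 * n + 1),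
      qBinom (q ^ 2) (2 * n) j * (q ^ 2) ^ j.choose 2 * q ^ j * (q ^ (2 * n)) ^ (2 * n - j)
        = q ^ (3 * n ^ 2) * (qBinom (q ^ 2) (2 * n) j * q ^ (n.dist j ^ 2)) := fun j hj => by
    rw [← pow_mul, ← pow_mul, mul_assoc _ _ (q ^ j), ← pow_add, mul_assoc, ← pow_add,
      two_mul_choose_two_add_add_mul_sub (by have := mem_range.mp hj; omega)]
    ring
  rw [lhs, sum_congr rfl rhs, ← mul_sum] at rothe
  exact mul_left_cancel₀ (pow_ne_zero _ hq) rothe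

end QBinomial

section JacobiTripleProduct

theorem sum_range_dist_add {M : Type*} [AddCommMonoid M] (g : ℕ → M) (n : ℕ) :
    ∑ i ∈ range (2 * n + 1), g (n.dist i) + g 0
      = ∑ k ∈ range (n + 1), g k + ∑ k ∈ range (n + 1), g k := by
  have low : ∑ i ∈ range n, g (n.dist i) = ∑ j ∈ range n, g (j + 1) := by
    rw [← sum_range_reflect]
    exact sum_congr rfl fun j hj => by
      rw [Nat.dist_eq_sub_of_le_right (by omega)]
      congr 1
      have := mem_range.mp hj
      omega
  have high : ∀ i, n.dist (n + i) = i := fun i => by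
    rw [Nat.dist_eq_sub_of_le (by omega), Nat.add_sub_cancel_left]
  rw [show 2 * n + 1 = n + (n + 1) by ring, sum_range_add, low, add_right_comm,
    ← sum_range_succ' g n]
  simp only [high]

theorem qPoch_X_sq (n : ℕ) :
    qPoch (X ^ 2 : ℚ⟦X⟧) n = ∏ k ∈ range n, (1 - X ^ (2 * (k + 1))) := by
  simp [qPoch, ← pow_mul]

theorem X_pow_dvd_qPoch_mul_qBinom_sub_one {d n i : ℕ} (hn : d < n) (hi : d < i)
    (hi' : d < 2 * n - i) (hin : i ≤ 2 * n) :
    X ^ (d + 1) ∣ qPoch (X ^ 2 : ℚ⟦X⟧) n * qBinom (X ^ 2) (2 * n) i - 1 := by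
  let π := Ideal.Quotient.mk (Ideal.span {(X : ℚ⟦X⟧) ^ (d + 1)})
  have hπ : ∀ {m}, d < m → π (qPoch (X ^ 2) m) = π (f 2) := fun {m} hm => by
    refine Ideal.Quotient.eq.mpr (Ideal.mem_span_singleton.mpr (X_pow_dvd_iff.mpr fun j hj => ?_))
    rw [map_sub, sub_eq_zero, qPoch_X_sq]
    exact stabilizesTo_f two_ne_zero j m (by omega)
  have hu : IsUnit (π (f 2)) :=
    (isUnit_iff_constantCoeff.mpr (by simp [constantCoeff_f])).map π
  have hprod := congrArg π (qBinom_mul_qPoch_mul_qPoch (X ^ 2 : ℚ⟦X⟧) hin)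
  simp only [map_mul, hπ hi, hπ hi', hπ (by omega : d < 2 * n)] at hprod
  have hinv : π (qBinom (X ^ 2) (2 * n) i) * π (f 2) = 1 :=
    hu.mul_left_cancel (by linear_combination hprod)
  rw [← Ideal.mem_span_singleton, ← Ideal.Quotient.eq_zero_iff_mem, map_sub, map_mul, hπ hn,
    map_one, mul_comm, hinv, sub_self]

theorem phi_eq_f_two_mul_sq : phi = f 2 * prodOneAddXOdd ^ 2 := by
  ext d
  set n := 2 * d + 1
  have hterm : ∀ j ∈ range (2 * n + 1), coeff d (qPoch (X ^ 2) n * (qBinom (X ^ 2) (2 * n) j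
      * X ^ (n.dist j ^ 2))) = if d = n.dist j ^ 2 then (1 : ℚ) else 0 := fun j hj => by
    rw [← mul_assoc, coeff_mul_X_pow']
    by_cases hle : n.dist j ^ 2 ≤ d
    · have := Nat.le_self_pow two_ne_zero (n.dist j)
      have := mem_range.mp hj
      have key := X_pow_dvd_iff.mp (X_pow_dvd_qPoch_mul_qBinom_sub_one (d := d) (n := n) (i := j)
        (by omega) (by unfold Nat.dist at *; omega) (by unfold Nat.dist at *; omega) (by omega))
        (d - n.dist j ^ 2) (by omega)
      rw [map_sub, sub_eq_zero, coeff_one] at key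
      rw [if_pos hle, key]
      split_ifs <;> first | rfl | omega
    · rw [if_neg hle, if_neg (by omega)]
  have hcount := sum_range_dist_add (fun k => if d = k ^ 2 then (1 : ℚ) else 0) n
  have hlim := ((stabilizesTo_f two_ne_zero).mul
    (stabilizesTo_prodOneAddXOdd.mul stabilizesTo_prodOneAddXOdd)) d n (by omega)
  rw [sq, ← hlim]
  dsimp only
  rw [← qPoch_X_sq, ← sq, sq_prod_one_add_pow_odd X_ne_zero, mul_sum, map_sum,
    sum_congr rfl hterm]
  rw [phi, two_mul, map_sub, map_add, ← stabilizesTo_squareSum d (n + 1) (by omega),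
    coeff_sum_X_pow, coeff_one, ← sum_boole]
  simp only [eq_comm (a := d), zero_pow two_ne_zero] at hcount ⊢
  linear_combination -hcount

end JacobiTripleProduct

section EtaQuotients

theorem constantCoeff_psi : constantCoeff psi = 1 := by
  rw [← coeff_zero_eq_constantCoeff_apply, ← stabilizesTo_psi 0 1 one_pos]
  simp [tri]

theorem phi_mul_f_one_sq_mul_f_four_sq : phi * f 1 ^ 2 * f 4 ^ 2 = f 2 ^ 5 := by
  rw [phi_eq_f_two_mul_sq]
  linear_combination (f 2 * (prodOneAddXOdd * f 1 * f 4 + f 2 ^ 2)) *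
    prodOneAddXOdd_mul_f_one_mul_f_four

theorem expand_f_one : E₂ (f 1) = f 2 := expand_f two_ne_zero one_ne_zero

theorem expand_f_two : E₂ (f 2) = f 4 := expand_f two_ne_zero two_ne_zero

theorem expand_f_four : E₂ (f 4) = f 8 := expand_f two_ne_zero four_ne_zero

theorem psi_mul_f_one : psi * f 1 = f 2 ^ 2 := by
  refine eq_of_sq_mul_eq_mul_expand (A := f 4 ^ 2) (B := f 2 ^ 4) ?_ ?_ ?_ ?_
  · rw [map_mul, expand_f_one]
    linear_combination (f 1 ^ 2 * f 4 ^ 2) * psi_sq + E₂ psi * phi_mul_f_one_sq_mul_f_four_sq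
  · rw [map_pow, expand_f_two]
    ring
  · simp [constantCoeff_psi, constantCoeff_f]
  · simp [constantCoeff_psi, constantCoeff_f]

theorem oddPart_phi_mul_f_four : oddPart phi * f 4 = 2 * f 8 ^ 2 := by
  have h := congrArg (fun F => E₂ (E₂ F)) psi_mul_f_one
  simp only [map_mul, map_pow, expand_f_one, expand_f_two, expand_f_four] at h
  rw [oddPart_phi]
  linear_combination 2 * h

theorem oddPart_phi_sq : oddPart (phi ^ 2) = 4 * E₂ (psi ^ 2) := by
  rw [oddPart_sq, evenPart_phi, oddPart_phi, psi_sq]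
  simp only [map_mul]
  ring

theorem evenPart_phi_sq : evenPart (phi ^ 2) = phi ^ 2 := by
  have hY : evenPart (phi ^ 2) = E₂ (phi ^ 2) + X * E₂ (E₂ (4 * psi ^ 2)) := by
    rw [evenPart_sq, evenPart_phi, oddPart_phi]
    simp only [map_mul, map_pow, map_ofNat]
    ring
  have hφ : phi ^ 2 = E₂ (evenPart (phi ^ 2)) + X * E₂ (E₂ (4 * psi ^ 2)) := by
    rw [map_mul (expand 2 two_ne_zero) 4, map_ofNat, ← oddPart_phi_sq,
      expand_evenPart_add_X_mul_expand_oddPart]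
  refine sub_eq_zero.mp (eq_zero_of_eq_neg_expand_two ?_)
  rw [map_sub]
  linear_combination hY - hφ

theorem oddPart_phi_pow_four : oddPart (phi ^ 4) = 8 * phi ^ 2 * E₂ (psi ^ 2) := by
  rw [show phi ^ 4 = (phi ^ 2) ^ 2 by ring, oddPart_sq, evenPart_phi_sq, oddPart_phi_sq]
  ring

theorem oddPart_phi_sq_mul_f_two_sq : oddPart (phi ^ 2) * f 2 ^ 2 = 4 * f 4 ^ 4 := by
  have h := congrArg E₂ psi_mul_f_one
  simp only [map_mul, map_pow, expand_f_one, expand_f_two] at h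
  rw [oddPart_phi_sq, map_pow]
  linear_combination 4 * (E₂ psi * f 2 + f 4 ^ 2) * h

theorem oddPart_phi_pow_four_mul_f_one_pow_four : oddPart (phi ^ 4) * f 1 ^ 4 = 8 * f 2 ^ 8 := by
  have h := congrArg E₂ psi_mul_f_one
  simp only [map_mul, map_pow, expand_f_one, expand_f_two] at h
  refine mul_right_cancel₀ (mul_ne_zero (pow_ne_zero 4 (f_ne_zero four_ne_zero))
    (pow_ne_zero 2 (f_ne_zero two_ne_zero))) ?_
  rw [oddPart_phi_pow_four, map_pow]
  linear_combination (8 * (E₂ psi * f 2) ^ 2 * (phi * f 1 ^ 2 * f 4 ^ 2 + f 2 ^ 5))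
    * phi_mul_f_one_sq_mul_f_four_sq + 8 * f 2 ^ 10 * (E₂ psi * f 2 + f 4 ^ 2) * h

end EtaQuotients

section Dissection

variable {P : ℚ⟦X⟧}

theorem oddPart_mul_f_one_pow_four_mul_f_four (hP : P * f 1 ^ 2 = f 2) :
    oddPart P * (f 1 ^ 4 * f 4) = 2 * f 2 ^ 2 * f 8 ^ 2 := by
  have h : P * E₂ (f 1 ^ 4) = phi * E₂ (f 2 ^ 2) := by
    refine mul_right_cancel₀ (pow_ne_zero 2 (f_ne_zero one_ne_zero)) ?_
    simp only [map_pow, expand_f_one, expand_f_two]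
    linear_combination f 2 ^ 4 * hP - phi_mul_f_one_sq_mul_f_four_sq
  have h' := mul_oddPart_eq_of_mul_expand_eq h
  linear_combination f 4 * h' + f 2 ^ 2 * oddPart_phi_mul_f_four

theorem oddPart_mul_f_one_pow_eight (hP : P * (f 1 ^ 4 * f 4) = 2 * f 2 ^ 2 * f 8 ^ 2) :
    oddPart P * f 1 ^ 8 = 8 * f 2 * f 4 ^ 6 := by
  have h : P * E₂ (f 1 ^ 10) = phi ^ 2 * E₂ (2 * f 1 ^ 2 * f 2 ^ 3 * f 4 ^ 2) := by
    refine mul_right_cancel₀ (mul_ne_zero (pow_ne_zero 4 (f_ne_zero one_ne_zero))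
      (f_ne_zero four_ne_zero)) ?_
    simp only [map_mul, map_pow, map_ofNat, expand_f_one, expand_f_two, expand_f_four]
    linear_combination f 2 ^ 10 * hP
      - 2 * f 2 ^ 2 * f 8 ^ 2 * (phi * f 1 ^ 2 * f 4 ^ 2 + f 2 ^ 5) * phi_mul_f_one_sq_mul_f_four_sq
  have h' := mul_oddPart_eq_of_mul_expand_eq h
  refine mul_left_cancel₀ (mul_ne_zero (pow_ne_zero 2 (f_ne_zero one_ne_zero))
    (pow_ne_zero 2 (f_ne_zero two_ne_zero))) ?_
  linear_combination f 2 ^ 2 * h' + 2 * f 1 ^ 2 * f 2 ^ 3 * f 4 ^ 2 * oddPart_phi_sq_mul_f_two_sq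

theorem oddPart_mul_f_one_pow_twentythree (hP : P * f 1 ^ 8 = 8 * f 2 * f 4 ^ 6) :
    oddPart P * f 1 ^ 23 = 64 * f 2 ^ 22 := by
  have h : P * E₂ (f 1 ^ 20) = phi ^ 4 * E₂ (8 * f 1 * f 2 ^ 14) := by
    refine mul_right_cancel₀ (pow_ne_zero 8 (f_ne_zero one_ne_zero)) ?_
    simp only [map_mul, map_pow, map_ofNat, expand_f_one, expand_f_two]
    set a := phi * f 1 ^ 2 * f 4 ^ 2
    linear_combination f 2 ^ 20 * hP
      - 8 * f 2 * f 4 ^ 6 * (a ^ 3 + a ^ 2 * f 2 ^ 5 + a * f 2 ^ 10 + f 2 ^ 15)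
        * phi_mul_f_one_sq_mul_f_four_sq
  have h' := mul_oddPart_eq_of_mul_expand_eq h
  refine mul_left_cancel₀ (f_ne_zero one_ne_zero) ?_
  linear_combination f 1 ^ 4 * h' + 8 * f 1 * f 2 ^ 14 * oddPart_phi_pow_four_mul_f_one_pow_four

end Dissection

end Overpartition

open Overpartition in
/-- $\sum_{n\ge 0}\bar p(8n+7)q^n = 64 f_2^{22}/f_1^{23}$. -/
theorem overpartition_8n7_genfun
    (p : ℕ → ℕ)
    (hp : PowerSeries.mk (fun n => (p n : ℚ)) = f 2 * ((f 1) ^ 2)⁻¹) :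
    PowerSeries.mk (fun n => (p (8 * n + 7) : ℚ)) =
      64 * (f 2) ^ 22 * ((f 1) ^ 23)⁻¹ := by
  have hc : ∀ k, constantCoeff (f 1 ^ k) ≠ 0 := fun k => by simp [constantCoeff_f]
  have hP : PowerSeries.mk (fun n => (p n : ℚ)) * f 1 ^ 2 = f 2 :=
    (eq_mul_inv_iff_mul_eq (hc 2)).mp hp
  have hU : PowerSeries.mk (fun n => (p (8 * n + 7) : ℚ))
      = oddPart (oddPart (oddPart (PowerSeries.mk fun n => (p n : ℚ)))) := by
    ext n
    simp only [oddPart, coeff_mk]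
    ring_nf
  rw [hU, eq_mul_inv_iff_mul_eq (hc 23)]
  exact oddPart_mul_f_one_pow_twentythree (oddPart_mul_f_one_pow_eight
    (oddPart_mul_f_one_pow_four_mul_f_four hP))
end

section
/- The 2-dissection identity 1/f₁² = f₈⁵ / (f₂⁵ f₁₆²) + 2q f₄² f₁₆² / (f₂⁵ f₈) holds as an identity of formal power series. -/
open PowerSeries

/-!
Write `θ(q) = ∑_{k ∈ ℤ} q^{k²}` and `Ψ(q) = ∑_{k ∈ ℤ} q^{k(k+1)/2}`. Splitting `k` by parity gives
`θ(q) = θ(q⁴) + q Ψ(q⁸)`, and Gauss' product formulas `θ(q) = f₂⁵ / (f₁² f₄²)` and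
`Ψ(q) = 2 f₂² / f₁` turn this into `f₂⁵ f₈ f₁₆² = f₁² (f₈⁶ + 2q f₄² f₁₆⁴)`, which is the identity
with denominators cleared.

Both product formulas are limits of the finite Jacobi triple product: for `a b = q`,
`∑_m [r+s, m]_q w(m - s) = ∏_{l<r} (1 + a q^l) ∏_{l<s} (1 + b q^l)`,
where `w(k) = a^k q^{k(k-1)/2}`. At `q = X^e` the Gaussian binomial `[i+j, i]` agrees with
`1 / f_e` modulo `X^{min(i,j)+1}`, so all limits are handled as congruences modulo `X^N`, and
every `N` is reached by taking `r, s` large.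
-/

open Finset

section GaussBinom

variable {A : Type*} [CommRing A]

def gaussBinom (q : A) : ℕ → ℕ → A
  | _, 0 => 1
  | 0, _ + 1 => 0
  | n + 1, k + 1 => q ^ (k + 1) * gaussBinom q n (k + 1) + gaussBinom q n k

@[simp] lemma gaussBinom_zero_right (q : A) (n : ℕ) : gaussBinom q n 0 = 1 := by
  cases n <;> rfl

lemma gaussBinom_succ_succ (q : A) (n k : ℕ) :
    gaussBinom q (n + 1) (k + 1) = q ^ (k + 1) * gaussBinom q n (k + 1) + gaussBinom q n k :=
  rfl

lemma gaussBinom_eq_zero_of_lt (q : A) {n k : ℕ} (h : n < k) : gaussBinom q n k = 0 := by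
  induction n generalizing k with
  | zero => obtain ⟨k, rfl⟩ := Nat.exists_eq_add_one_of_ne_zero (by omega : k ≠ 0); rfl
  | succ n ih =>
    obtain ⟨k, rfl⟩ := Nat.exists_eq_add_one_of_ne_zero (by omega : k ≠ 0)
    rw [gaussBinom_succ_succ, ih (by omega), ih (by omega), mul_zero, add_zero]

@[simp] lemma gaussBinom_self (q : A) (n : ℕ) : gaussBinom q n n = 1 := by
  induction n with
  | zero => rfl
  | succ n ih => rw [gaussBinom_succ_succ, gaussBinom_eq_zero_of_lt q n.lt_succ_self, ih]; ring

def qPochhammer (q : A) (n : ℕ) : A := ∏ i ∈ range n, (1 - q ^ (i + 1))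

@[simp] lemma qPochhammer_zero (q : A) : qPochhammer q 0 = 1 := prod_range_zero _

lemma qPochhammer_succ (q : A) (n : ℕ) :
    qPochhammer q (n + 1) = qPochhammer q n * (1 - q ^ (n + 1)) :=
  prod_range_succ _ _

lemma gaussBinom_add_mul_qPochhammer (q : A) (i j : ℕ) :
    gaussBinom q (i + j) i * qPochhammer q i * qPochhammer q j = qPochhammer q (i + j) := by
  induction i generalizing j with
  | zero => simp
  | succ i ih =>
    induction j with
    | zero => simp
    | succ j ihj =>
      have h₁ : gaussBinom q (i + 1 + j) i * qPochhammer q i * qPochhammer q (j + 1) =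
          qPochhammer q (i + 1 + j) := by
        rw [show i + 1 + j = i + (j + 1) by ring]; exact ih (j + 1)
      rw [show i + 1 + (j + 1) = i + 1 + j + 1 by ring, gaussBinom_succ_succ,
        qPochhammer_succ q (i + 1 + j), qPochhammer_succ q i, qPochhammer_succ q j]
      rw [qPochhammer_succ q i] at ihj
      rw [qPochhammer_succ q j] at h₁
      linear_combination (q ^ (i + 1) * (1 - q ^ (j + 1))) * ihj + (1 - q ^ (i + 1)) * h₁

lemma sum_range_gaussBinom_succ_mul (q : A) (n : ℕ) (c : ℕ → A) :
    ∑ m ∈ range (n + 1 + 1), gaussBinom q (n + 1) m * c m =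
      ∑ m ∈ range (n + 1), gaussBinom q n m * (q ^ m * c m + c (m + 1)) := by
  have hshift : ∑ m ∈ range (n + 1), q ^ (m + 1) * gaussBinom q n (m + 1) * c (m + 1) + c 0 =
      ∑ m ∈ range (n + 1), gaussBinom q n m * (q ^ m * c m) := by
    have h := sum_range_succ' (fun m => gaussBinom q n m * (q ^ m * c m)) (n + 1)
    rw [sum_range_succ, gaussBinom_eq_zero_of_lt q n.lt_succ_self] at h
    simp only [zero_mul, add_zero, gaussBinom_zero_right, pow_zero, one_mul] at h
    rw [h]
    exact congrArg₂ _ (sum_congr rfl fun m _ => by ring) rfl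
  rw [sum_range_succ' _ (n + 1)]
  simp only [gaussBinom_succ_succ, gaussBinom_zero_right, add_mul, sum_add_distrib, mul_add]
  linear_combination hshift

theorem sum_range_gaussBinom_mul_eq_prod (q : A) (n : ℕ) (a : A) :
    ∑ m ∈ range (n + 1), gaussBinom q n m * (a ^ m * q ^ m.choose 2) =
      ∏ l ∈ range n, (1 + a * q ^ l) := by
  induction n generalizing a with
  | zero => simp
  | succ n ih =>
    have hprod : ∏ l ∈ range n, (1 + a * q ^ (l + 1)) = ∏ l ∈ range n, (1 + a * q * q ^ l) :=
      prod_congr rfl fun _ _ => by ring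
    rw [sum_range_gaussBinom_succ_mul, prod_range_succ', hprod, ← ih (a * q), pow_zero, mul_one,
      mul_comm _ (1 + a), mul_sum]
    refine sum_congr rfl fun m _ => ?_
    rw [Nat.choose_succ_succ', Nat.choose_one_right]
    ring

end GaussBinom

section JacobiTripleProduct

variable {A : Type*} [CommRing A]

/-- When `a * b = q`, this is the Laurent monomial `a ^ k * q ^ (k * (k - 1) / 2)` for every
`k : ℤ`, written without negative powers. -/
def jacobiTripleWeight (a b q : A) : ℤ → A
  | (j : ℕ) => a ^ j * q ^ j.choose 2
  | Int.negSucc j => b ^ (j + 1) * q ^ (j + 1).choose 2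

variable (a b q : A)

lemma jacobiTripleWeight_natCast (j : ℕ) : jacobiTripleWeight a b q j = a ^ j * q ^ j.choose 2 :=
  rfl

lemma jacobiTripleWeight_natCast_succ (j : ℕ) :
    jacobiTripleWeight a b q (j + 1) = a * q ^ j * jacobiTripleWeight a b q j := by
  rw [← Nat.cast_succ, jacobiTripleWeight_natCast, jacobiTripleWeight_natCast,
    Nat.choose_succ_succ', Nat.choose_one_right, Nat.succ_eq_add_one]
  ring

lemma jacobiTripleWeight_neg_sub_one (j : ℕ) :
    jacobiTripleWeight a b q (-j - 1) = b * q ^ j * jacobiTripleWeight a b q (-j) := by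
  rw [show -(j : ℤ) - 1 = Int.negSucc j by omega]
  cases j with
  | zero => simp [jacobiTripleWeight]
  | succ j =>
    rw [show -((j + 1 : ℕ) : ℤ) = Int.negSucc j by omega]
    simp only [jacobiTripleWeight, Nat.choose_succ_succ' (j + 1), Nat.choose_one_right]
    ring

variable {a b q}

theorem eq_jacobiTripleWeight {g : ℤ → A} (h₀ : g 0 = 1)
    (hpos : ∀ j : ℕ, g (j + 1) = a * q ^ j * g j)
    (hneg : ∀ j : ℕ, g (-j - 1) = b * q ^ j * g (-j)) :
    g = jacobiTripleWeight a b q := by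
  funext k
  induction k using Int.induction_on with
  | zero => rw [h₀, ← Nat.cast_zero, jacobiTripleWeight_natCast]; simp
  | succ j ih => rw [hpos, jacobiTripleWeight_natCast_succ, ih]
  | pred j ih => rw [hneg, jacobiTripleWeight_neg_sub_one, ih]

lemma pow_mul_jacobiTripleWeight_sub_succ (h : a * b = q) (m s : ℕ) :
    q ^ m * jacobiTripleWeight a b q (m - (s + 1 : ℕ)) =
      b * q ^ s * jacobiTripleWeight a b q (m - s) := by
  subst h
  rcases le_or_gt m s with hms | hms
  · obtain ⟨j, rfl⟩ := Nat.exists_eq_add_of_le hms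
    rw [show (m : ℤ) - (m + j + 1 : ℕ) = -j - 1 by push_cast; ring,
      show (m : ℤ) - (m + j : ℕ) = -j by push_cast; ring, jacobiTripleWeight_neg_sub_one]
    ring
  · obtain ⟨j, rfl⟩ := Nat.exists_eq_add_of_lt hms
    rw [show ((s + j + 1 : ℕ) : ℤ) - (s + 1 : ℕ) = j by push_cast; ring,
      show ((s + j + 1 : ℕ) : ℤ) - (s : ℕ) = j + 1 by push_cast; ring,
      jacobiTripleWeight_natCast_succ]
    ring

def jacobiTripleSum (a b q : A) (r s : ℕ) : A :=
  ∑ m ∈ range (r + s + 1), gaussBinom q (r + s) m * jacobiTripleWeight a b q (m - s)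

theorem jacobiTripleSum_eq_prod (h : a * b = q) (r s : ℕ) :
    jacobiTripleSum a b q r s =
      (∏ l ∈ range r, (1 + a * q ^ l)) * ∏ l ∈ range s, (1 + b * q ^ l) := by
  induction s with
  | zero =>
    rw [jacobiTripleSum, ← sum_range_gaussBinom_mul_eq_prod, prod_range_zero, mul_one]
    simp [jacobiTripleWeight_natCast]
  | succ s ih =>
    rw [jacobiTripleSum, ← add_assoc, sum_range_gaussBinom_succ_mul, prod_range_succ, ← mul_assoc,
      ← ih, jacobiTripleSum, mul_comm, mul_sum]
    refine sum_congr rfl fun m _ => ?_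
    rw [pow_mul_jacobiTripleWeight_sub_succ h,
      show ((m + 1 : ℕ) : ℤ) - (s + 1 : ℕ) = m - s by push_cast; ring]
    ring

end JacobiTripleProduct

def triangular (k : ℤ) : ℕ := (k * (k + 1) / 2).toNat

theorem two_mul_natCast_triangular (k : ℤ) : 2 * (triangular k : ℤ) = k * (k + 1) := by
  obtain ⟨c, hc⟩ := Int.even_mul_succ_self k
  have : 0 ≤ k * (k + 1) := by nlinarith [sq_nonneg (2 * k + 1)]
  unfold triangular
  omega

lemma natAbs_two_mul_add_one_sq (k : ℤ) : (2 * k + 1).natAbs ^ 2 = 8 * triangular k + 1 := by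
  have := two_mul_natCast_triangular k
  zify
  rw [sq_abs]
  linear_combination -4 * this

lemma natAbs_le_triangular_add_one (k : ℤ) : k.natAbs ≤ triangular k + 1 := by
  have := two_mul_natCast_triangular k
  rcases le_or_gt 0 k with h | h
  · zify; rw [abs_of_nonneg h]; nlinarith
  · zify; rw [abs_of_neg h]; nlinarith

section JacobiTripleProductSpecial

variable {A : Type*} [CommRing A] (t : A)

lemma jacobiTripleWeight_self_sq : jacobiTripleWeight t t (t ^ 2) = fun k => t ^ k.natAbs ^ 2 := by
  refine (eq_jacobiTripleWeight (by simp) (fun j => ?_) (fun j => ?_)).symm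
  · rw [show ((j : ℤ) + 1).natAbs = j + 1 by omega, Int.natAbs_natCast]; ring
  · rw [show (-(j : ℤ) - 1).natAbs = j + 1 by omega, show (-(j : ℤ)).natAbs = j by omega]; ring

lemma jacobiTripleWeight_one : jacobiTripleWeight t 1 t = fun k => t ^ triangular k := by
  refine (eq_jacobiTripleWeight (by simp [triangular]) (fun j => ?_) (fun j => ?_)).symm
  · have h₁ := two_mul_natCast_triangular (j + 1)
    have h₂ := two_mul_natCast_triangular j
    rw [show triangular (j + 1) = j + 1 + triangular j by zify; linarith]
    ring
  · have h₁ := two_mul_natCast_triangular (-j - 1)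
    have h₂ := two_mul_natCast_triangular (-j)
    rw [show triangular (-j - 1) = j + triangular (-j) by zify; linarith]
    ring

end JacobiTripleProductSpecial

section Products

variable {A : Type*} [CommRing A] (t : A)

lemma prod_one_add_pow_succ_mul_qPochhammer (n : ℕ) :
    (∏ l ∈ range n, (1 + t ^ (l + 1))) * qPochhammer t n = qPochhammer (t ^ 2) n := by
  rw [qPochhammer, qPochhammer, ← prod_mul_distrib]
  exact prod_congr rfl fun l _ => by ring

lemma prod_one_sub_pow_odd_mul_qPochhammer (n : ℕ) :
    (∏ l ∈ range n, (1 - t ^ (2 * l + 1))) * qPochhammer (t ^ 2) n = qPochhammer t (2 * n) := by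
  induction n with
  | zero => simp
  | succ n ih =>
    rw [prod_range_succ, qPochhammer_succ, show 2 * (n + 1) = 2 * n + 1 + 1 by ring,
      qPochhammer_succ, qPochhammer_succ, ← ih]
    ring

lemma prod_one_add_pow_odd_mul_qPochhammer (n : ℕ) :
    (∏ l ∈ range n, (1 + t ^ (2 * l + 1))) * qPochhammer t (2 * n) * qPochhammer (t ^ 4) n =
      qPochhammer (t ^ 2) (2 * n) * qPochhammer (t ^ 2) n := by
  have h : (∏ l ∈ range n, (1 + t ^ (2 * l + 1))) * ∏ l ∈ range n, (1 - t ^ (2 * l + 1)) =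
      ∏ l ∈ range n, (1 - (t ^ 2) ^ (2 * l + 1)) := by
    rw [← prod_mul_distrib]
    exact prod_congr rfl fun l _ => by ring
  rw [← prod_one_sub_pow_odd_mul_qPochhammer t, ← prod_one_sub_pow_odd_mul_qPochhammer (t ^ 2),
    show t ^ 4 = (t ^ 2) ^ 2 by ring]
  linear_combination (qPochhammer (t ^ 2) n * qPochhammer ((t ^ 2) ^ 2) n) * h

end Products

section Reindex

variable {M : Type*} [AddCommMonoid M]

lemma sum_range_sub_eq_sum_Icc (g : ℤ → M) (r s : ℕ) :
    ∑ m ∈ range (r + s + 1), g (m - s) = ∑ k ∈ Icc (-(s : ℤ)) r, g k := by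
  refine sum_nbij' (fun m => (m : ℤ) - s) (fun k => (k + s).toNat) ?_ ?_ ?_ ?_ ?_ <;>
    intro x hx <;> simp at hx ⊢ <;> omega

lemma sum_Icc_neg_two_mul_add_one (g : ℤ → M) (n : ℕ) :
    ∑ k ∈ Icc (-(2 * n + 1 : ℤ)) (2 * n + 1), g k =
      ∑ k ∈ Icc (-(n : ℤ)) n, g (2 * k) + ∑ k ∈ Icc (-(n : ℤ) - 1) n, g (2 * k + 1) := by
  have hinj₁ : Set.InjOn (fun k : ℤ => 2 * k) ↑(Icc (-(n : ℤ)) n) := fun a _ b _ h => by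
    simp only at h; omega
  have hinj₂ : Set.InjOn (fun k : ℤ => 2 * k + 1) ↑(Icc (-(n : ℤ) - 1) n) := fun a _ b _ h => by
    simp only at h; omega
  rw [← sum_image hinj₁, ← sum_image hinj₂, ← sum_union]
  · congr 1
    ext k
    simp only [mem_Icc, mem_union, mem_image]
    constructor
    · intro hk
      rcases Int.even_or_odd' k with ⟨a, rfl | rfl⟩
      · exact Or.inl ⟨a, by omega, rfl⟩
      · exact Or.inr ⟨a, by omega, rfl⟩
    · rintro (⟨a, ha, rfl⟩ | ⟨a, ha, rfl⟩) <;> omega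
  · rw [disjoint_left]
    simp only [mem_image]
    rintro _ ⟨a, _, rfl⟩ ⟨b, _, h⟩
    omega

end Reindex

section Congruence

variable {R : Type*} [CommRing R]

lemma coeff_eq_of_smodEq {N j : ℕ} {a b : R⟦X⟧} (h : a ≡ b [SMOD Ideal.span {X ^ N}])
    (hj : j < N) : coeff j a = coeff j b := by
  rw [SModEq.sub_mem, Ideal.mem_span_singleton, X_pow_dvd_iff] at h
  simpa [sub_eq_zero] using h j hj

lemma eq_of_forall_smodEq {a b : R⟦X⟧} (h : ∀ N, a ≡ b [SMOD Ideal.span {X ^ N}]) : a = b :=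
  ext fun j => coeff_eq_of_smodEq (h (j + 1)) j.lt_succ_self

lemma X_pow_mul_smodEq {M N e : ℕ} {u v : R⟦X⟧} (h : u ≡ v [SMOD Ideal.span {X ^ M}])
    (hN : N ≤ e + M) : X ^ e * u ≡ X ^ e * v [SMOD Ideal.span {X ^ N}] := by
  rw [SModEq.sub_mem, Ideal.mem_span_singleton] at h ⊢
  rw [← mul_sub]
  exact (pow_dvd_pow (X : R⟦X⟧) hN).trans (by rw [pow_add]; exact mul_dvd_mul_left _ h)

lemma X_pow_smodEq_zero {N e : ℕ} (h : N ≤ e) :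
    (X : R⟦X⟧) ^ e ≡ 0 [SMOD Ideal.span {X ^ N}] :=
  SModEq.zero.mpr (Ideal.mem_span_singleton.mpr (pow_dvd_pow X h))

lemma qPochhammer_X_pow_smodEq {d n n' : ℕ} (hd : 0 < d) (h : n ≤ n') :
    qPochhammer ((X : R⟦X⟧) ^ d) n' ≡ qPochhammer (X ^ d) n [SMOD Ideal.span {X ^ (n + 1)}] := by
  rw [qPochhammer, qPochhammer, ← prod_range_mul_prod_Ico _ h]
  have htail : ∏ i ∈ Ico n n', (1 - ((X : R⟦X⟧) ^ d) ^ (i + 1)) ≡ ∏ i ∈ Ico n n', 1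
      [SMOD Ideal.span {X ^ (n + 1)}] := SModEq.prod fun i hi => by
    rw [← pow_mul]
    have : n + 1 ≤ d * (i + 1) := by rw [mem_Ico] at hi; nlinarith
    simpa using SModEq.rfl.sub (X_pow_smodEq_zero (R := R) this)
  simpa using SModEq.rfl.mul htail

end Congruence

lemma coeff_f (d n : ℕ) : coeff n (f d) = coeff n (qPochhammer ((X : ℚ⟦X⟧) ^ d) (n + 1)) := by
  simp_rw [f, coeff_mk, qPochhammer, ← pow_mul]

lemma f_smodEq_qPochhammer {d N n : ℕ} (hd : 0 < d) (hN : N ≤ n + 1) :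
    f d ≡ qPochhammer (X ^ d) n [SMOD Ideal.span {X ^ N}] := by
  rw [SModEq.sub_mem, Ideal.mem_span_singleton, X_pow_dvd_iff]
  intro j hj
  rw [map_sub, sub_eq_zero, coeff_f,
    coeff_eq_of_smodEq (qPochhammer_X_pow_smodEq hd j.le_succ) j.lt_succ_self,
    coeff_eq_of_smodEq (qPochhammer_X_pow_smodEq hd (by omega : j ≤ n)) j.lt_succ_self]

lemma constantCoeff_f {d : ℕ} (hd : 0 < d) : constantCoeff (f d) = 1 := by
  simpa [qPochhammer] using
    coeff_eq_of_smodEq (f_smodEq_qPochhammer hd (N := 1) (n := 0) le_rfl) zero_lt_one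

lemma f_mul_inv {d : ℕ} (hd : 0 < d) : f d * (f d)⁻¹ = 1 :=
  PowerSeries.mul_inv_cancel _ (by simp [constantCoeff_f hd])

lemma gaussBinom_smodEq_inv_f {e N i j : ℕ} (he : 0 < e) (hi : N ≤ i + 1) (hj : N ≤ j + 1) :
    gaussBinom ((X : ℚ⟦X⟧) ^ e) (i + j) i ≡ (f e)⁻¹ [SMOD Ideal.span {X ^ N}] := by
  have hprod := congrArg (Ideal.Quotient.mk (Ideal.span {(X : ℚ⟦X⟧) ^ N}))
    (gaussBinom_add_mul_qPochhammer (X ^ e) i j)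
  have hinv := congrArg (Ideal.Quotient.mk (Ideal.span {(X : ℚ⟦X⟧) ^ N})) (f_mul_inv he)
  have h₁ := f_smodEq_qPochhammer he hi
  have h₂ := f_smodEq_qPochhammer he hj
  have h₃ := f_smodEq_qPochhammer (N := N) he (n := i + j) (by omega)
  rw [SModEq.idealQuotientMk] at h₁ h₂ h₃ ⊢
  simp only [map_mul, map_one, ← h₁, ← h₂, ← h₃] at hprod hinv
  set π := Ideal.Quotient.mk (Ideal.span {(X : ℚ⟦X⟧) ^ N})
  linear_combination π (f e)⁻¹ ^ 2 * hprod +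
    (π (f e)⁻¹ - π (gaussBinom (X ^ e) (i + j) i) * (π (f e) * π (f e)⁻¹ + 1)) * hinv

lemma sum_gaussBinom_mul_X_pow_smodEq {e N L : ℕ} (he : 0 < e) (c : ℕ → ℕ)
    (hc : ∀ m ≤ L, N ≤ m + 1 + c m ∧ N ≤ L - m + 1 + c m) :
    ∑ m ∈ range (L + 1), gaussBinom ((X : ℚ⟦X⟧) ^ e) L m * X ^ c m ≡
      (∑ m ∈ range (L + 1), X ^ c m) * (f e)⁻¹ [SMOD Ideal.span {X ^ N}] := by
  rw [sum_mul]
  refine SModEq.sum fun m hm => ?_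
  have hmL : m ≤ L := Nat.lt_succ_iff.mp (mem_range.mp hm)
  obtain ⟨h₁, h₂⟩ := hc m hmL
  rw [mul_comm, ← Nat.add_sub_cancel' hmL]
  exact X_pow_mul_smodEq (gaussBinom_smodEq_inv_f he (N := N - c m) (by omega) (by omega))
    (by omega)

lemma prod_one_add_X_pow_succ_mul_f_smodEq {d N n : ℕ} (hd : 0 < d) (hN : N ≤ n + 1) :
    (∏ l ∈ range n, (1 + ((X : ℚ⟦X⟧) ^ d) ^ (l + 1))) * f d ≡ f (2 * d)
      [SMOD Ideal.span {X ^ N}] := by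
  refine (SModEq.rfl.mul (f_smodEq_qPochhammer hd hN)).trans ?_
  rw [prod_one_add_pow_succ_mul_qPochhammer, ← pow_mul, mul_comm d]
  exact (f_smodEq_qPochhammer (by omega) hN).symm

lemma prod_one_add_X_pow_odd_mul_f_smodEq {d N n : ℕ} (hd : 0 < d) (hN : N ≤ n + 1) :
    (∏ l ∈ range n, (1 + ((X : ℚ⟦X⟧) ^ d) ^ (2 * l + 1))) * f d * f (4 * d) ≡ f (2 * d) ^ 2
      [SMOD Ideal.span {X ^ N}] := by
  refine ((SModEq.rfl.mul (f_smodEq_qPochhammer hd (n := 2 * n) (by omega))).mul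
    (f_smodEq_qPochhammer (by omega) hN)).trans ?_
  rw [show 4 * d = d * 4 by ring, pow_mul, prod_one_add_pow_odd_mul_qPochhammer, ← pow_mul,
    mul_comm d, sq]
  exact ((f_smodEq_qPochhammer (by omega) (by omega)).mul (f_smodEq_qPochhammer (by omega) hN)).symm

noncomputable def partialTheta (d n : ℕ) : ℚ⟦X⟧ := ∑ k ∈ Icc (-(n : ℤ)) n, X ^ (d * k.natAbs ^ 2)

noncomputable def partialPsi (d n : ℕ) : ℚ⟦X⟧ := ∑ k ∈ Icc (-(n : ℤ) - 1) n, X ^ (d * triangular k)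

lemma jacobiTripleSum_X_pow_smodEq {a b : ℚ⟦X⟧} {e r s N : ℕ} (he : 0 < e) (c : ℤ → ℕ)
    (hw : jacobiTripleWeight a b (X ^ e) = fun k => X ^ c k)
    (hc : ∀ m ≤ r + s, N ≤ m + 1 + c (m - s) ∧ N ≤ r + s - m + 1 + c (m - s)) :
    jacobiTripleSum a b (X ^ e) r s ≡ (∑ k ∈ Icc (-(s : ℤ)) r, X ^ c k) * (f e)⁻¹
      [SMOD Ideal.span {X ^ N}] := by
  rw [jacobiTripleSum, hw, ← sum_range_sub_eq_sum_Icc (fun k => (X : ℚ⟦X⟧) ^ c k)]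
  exact sum_gaussBinom_mul_X_pow_smodEq he (fun m => c (m - s)) hc

lemma partialTheta_mul_smodEq {d N n : ℕ} (hd : 0 < d) (hN : N ≤ n) :
    partialTheta d n * f d ^ 2 * f (4 * d) ^ 2 ≡ f (2 * d) ^ 5 [SMOD Ideal.span {X ^ N}] := by
  have hw : jacobiTripleWeight ((X : ℚ⟦X⟧) ^ d) (X ^ d) (X ^ (2 * d)) =
      fun k => X ^ (d * k.natAbs ^ 2) := by
    rw [mul_comm, pow_mul, jacobiTripleWeight_self_sq]
    simp_rw [← pow_mul]
  have hlim := jacobiTripleSum_X_pow_smodEq (r := n) (s := n) (N := N) (by omega) _ hw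
    fun m hm => by
      have : ((m : ℤ) - n).natAbs ≤ d * ((m : ℤ) - n).natAbs ^ 2 :=
        (Nat.le_self_pow two_ne_zero _).trans (Nat.le_mul_of_pos_left _ hd)
      omega
  rw [jacobiTripleSum_eq_prod (by ring), ← partialTheta] at hlim
  have hprod := prod_one_add_X_pow_odd_mul_f_smodEq hd (n := n) (N := N) (by omega)
  rw [prod_congr rfl fun l _ => show (1 : ℚ⟦X⟧) + (X ^ d) ^ (2 * l + 1) =
    1 + X ^ d * (X ^ (2 * d)) ^ l by ring] at hprod
  have hinv := congrArg (Ideal.Quotient.mk (Ideal.span {(X : ℚ⟦X⟧) ^ N}))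
    (f_mul_inv (d := 2 * d) (by omega))
  rw [SModEq.idealQuotientMk] at hlim hprod ⊢
  simp only [map_mul, map_pow, map_one] at hlim hprod hinv ⊢
  set π := Ideal.Quotient.mk (Ideal.span {(X : ℚ⟦X⟧) ^ N})
  linear_combination -(π (partialTheta d n) * π (f d) ^ 2 * π (f (4 * d)) ^ 2) * hinv -
    (π (f (2 * d)) * π (f d) ^ 2 * π (f (4 * d)) ^ 2) * hlim +
    π (f (2 * d)) * (π (∏ l ∈ range n, (1 + X ^ d * (X ^ (2 * d)) ^ l)) * π (f d) * π (f (4 * d)) +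
      π (f (2 * d)) ^ 2) * hprod

lemma partialPsi_mul_smodEq {d N n : ℕ} (hd : 0 < d) (hN : N ≤ n) :
    partialPsi d n * f d ≡ 2 * f (2 * d) ^ 2 [SMOD Ideal.span {X ^ N}] := by
  have hw : jacobiTripleWeight ((X : ℚ⟦X⟧) ^ d) 1 (X ^ d) = fun k => X ^ (d * triangular k) := by
    rw [jacobiTripleWeight_one]
    simp_rw [← pow_mul]
  have hlim := jacobiTripleSum_X_pow_smodEq (r := n) (s := n + 1) (N := N) hd _ hw
    fun m hm => by
      have h₁ := natAbs_le_triangular_add_one ((m : ℤ) - (n + 1 : ℕ))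
      have h₂ := Nat.le_mul_of_pos_left (triangular ((m : ℤ) - (n + 1 : ℕ))) hd
      omega
  rw [jacobiTripleSum_eq_prod (by ring), prod_range_succ', Nat.cast_succ, neg_add',
    ← partialPsi] at hlim
  simp only [one_mul, pow_zero, ← pow_succ'] at hlim
  have hprod := prod_one_add_X_pow_succ_mul_f_smodEq hd (n := n) (N := N) (by omega)
  have hinv := congrArg (Ideal.Quotient.mk (Ideal.span {(X : ℚ⟦X⟧) ^ N})) (f_mul_inv hd)
  rw [SModEq.idealQuotientMk] at hlim hprod ⊢
  simp only [map_mul, map_pow, map_add, map_one, map_ofNat] at hlim hprod hinv ⊢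
  set π := Ideal.Quotient.mk (Ideal.span {(X : ℚ⟦X⟧) ^ N})
  linear_combination -(π (partialPsi d n) * π (f d)) * hinv - π (f d) ^ 2 * hlim +
    2 * (π (∏ l ∈ range n, (1 + (X ^ d) ^ (l + 1))) * π (f d) + π (f (2 * d))) * hprod

lemma partialTheta_one_two_mul_add_one (n : ℕ) :
    partialTheta 1 (2 * n + 1) = partialTheta 4 n + X * partialPsi 8 n := by
  rw [partialTheta, partialTheta, partialPsi, mul_sum, Nat.cast_add_one, Nat.cast_mul,
    Nat.cast_two, sum_Icc_neg_two_mul_add_one]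
  congr 1
  · refine sum_congr rfl fun k _ => ?_
    rw [Int.natAbs_mul]
    ring
  · refine sum_congr rfl fun k _ => ?_
    rw [one_mul, natAbs_two_mul_add_one_sq, ← pow_succ']

theorem f_two_pow_five_mul_eq :
    f 2 ^ 5 * f 8 * f 16 ^ 2 = f 1 ^ 2 * (f 8 ^ 6 + 2 * X * f 4 ^ 2 * f 16 ^ 4) := by
  refine eq_of_forall_smodEq fun N => ?_
  have h₁ := partialTheta_mul_smodEq (d := 1) one_pos (by omega : N ≤ 2 * N + 1)
  have h₄ := partialTheta_mul_smodEq (d := 4) (by norm_num) (le_refl N)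
  have h₈ := partialPsi_mul_smodEq (d := 8) (by norm_num) (le_refl N)
  rw [partialTheta_one_two_mul_add_one] at h₁
  rw [SModEq.idealQuotientMk] at h₁ h₄ h₈ ⊢
  simp only [map_mul, map_pow, map_add, map_ofNat] at h₁ h₄ h₈ ⊢
  norm_num at h₁ h₄ h₈
  set π := Ideal.Quotient.mk (Ideal.span {(X : ℚ⟦X⟧) ^ N})
  linear_combination -(π (f 8) * π (f 16) ^ 2) * h₁ + (π (f 1) ^ 2 * π (f 8)) * h₄ +
    (π X * π (f 1) ^ 2 * π (f 4) ^ 2 * π (f 16) ^ 2) * h₈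

/-- $1/f_1^2 = f_8^5/(f_2^5 f_{16}^2) + 2q f_4^2 f_{16}^2/(f_2^5 f_8)$. -/
theorem dissection_inv_f1_sq :
    ((f 1) ^ 2)⁻¹ =
      (f 8) ^ 5 * ((f 2) ^ 5 * (f 16) ^ 2)⁻¹
        + 2 * PowerSeries.X * (f 4) ^ 2 * (f 16) ^ 2 * ((f 2) ^ 5 * f 8)⁻¹ := by
  have hcc : ∀ φ : ℚ⟦X⟧, constantCoeff φ = 1 → φ * φ⁻¹ = 1 := fun φ h =>
    PowerSeries.mul_inv_cancel φ (by simp [h])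
  have h₁ := hcc (f 1 ^ 2) (by simp [constantCoeff_f])
  have h₂ := hcc (f 2 ^ 5 * f 16 ^ 2) (by simp [constantCoeff_f])
  have h₃ := hcc (f 2 ^ 5 * f 8) (by simp [constantCoeff_f])
  have hW : f 1 ^ 2 * (f 2 ^ 5 * f 16 ^ 2) * (f 2 ^ 5 * f 8) ≠ 0 := fun h => by
    simpa [constantCoeff_f] using congrArg constantCoeff h
  refine mul_right_cancel₀ hW ?_
  linear_combination (f 2 ^ 5 * f 16 ^ 2 * (f 2 ^ 5 * f 8)) * h₁ -
    (f 8 ^ 5 * f 1 ^ 2 * (f 2 ^ 5 * f 8)) * h₂ -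
    (2 * X * f 4 ^ 2 * f 16 ^ 2 * f 1 ^ 2 * (f 2 ^ 5 * f 16 ^ 2)) * h₃ +
    f 2 ^ 5 * f_two_pow_five_mul_eq
end

section
/- As formal power series, ∑_{n∈ℤ} q^{n²} = φ(q²⁵) + 2q D(q⁵) + 2q⁴ E(q⁵), where D(q) = ∑_{n∈ℤ} q^{5n²+2n} and E(q) = ∑_{n∈ℤ} q^{5n²+4n}. -/
open PowerSeries

/-- `phi j` is the theta series `φ(q^j) = ∑_{m ∈ ℤ} q^{j m²}`: the `n`-th
coefficient is the number of integers `m` with `j·m² = n`. -/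
noncomputable def phi (j : ℕ) : PowerSeries ℚ :=
  PowerSeries.mk fun n =>
    ((((Finset.Icc (-(n : ℤ)) (n : ℤ))).filter fun m => (j : ℤ) * m ^ 2 = (n : ℤ)).card : ℚ)

/--  is  where . -/
noncomputable def Dth (j : ℕ) : PowerSeries ℚ :=
  PowerSeries.mk fun n =>
    ((((Finset.Icc (-(n : ℤ)) (n : ℤ))).filter
        fun m => (j : ℤ) * (5 * m ^ 2 + 2 * m) = (n : ℤ)).card : ℚ)

/--  is  where . -/
noncomputable def Eth (j : ℕ) : PowerSeries ℚ :=
  PowerSeries.mk fun n =>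
    ((((Finset.Icc (-(n : ℤ)) (n : ℤ))).filter
        fun m => (j : ℤ) * (5 * m ^ 2 + 4 * m) = (n : ℤ)).card : ℚ)
/-!
Sort the integers `m` with `m² = n` by `m mod 5`. Writing `m = 5k + r`, the residue `0` gives
`25k² = n`, the residue `1` gives `5(5k² + 2k) + 1 = n` and the residue `2` gives
`5(5k² + 4k) + 4 = n`; the substitution `k ↦ -1 - k` sends `5k + 4` to `-(5k + 1)` and `5k + 3`
to `-(5k + 2)`, so the residues `4` and `3` contribute as much as `1` and `2`.
-/

/-- The series `∑_{m ∈ ℤ} q^{f m}`. It is only meaningful when `f` has finite fibres, since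
`Nat.card` of an infinite type is `0`. -/
noncomputable def thetaSeries (f : ℤ → ℤ) : ℚ⟦X⟧ :=
  PowerSeries.mk fun n => Nat.card {m // f m = n}

theorem abs_le_mul_sq_add_mul {a b : ℤ} (hab : |b| < a) (m : ℤ) :
    |m| ≤ a * m ^ 2 + b * m := by
  rcases eq_or_ne m 0 with rfl | hm
  · simp
  have hbm : -(b * m) ≤ |b| * |m| := by rw [← abs_mul]; exact neg_le_abs _
  have hb : |b| + 1 ≤ a * |m| := by nlinarith [abs_nonneg b, Int.one_le_abs hm]
  have := mul_le_mul_of_nonneg_left hb (abs_nonneg m)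
  rw [← sq_abs m]
  linarith

theorem abs_le_mul_mul_sq_add_mul {j a b : ℤ} (hj : 1 ≤ j) (hab : |b| < a) (m : ℤ) :
    |m| ≤ j * (a * m ^ 2 + b * m) :=
  have hm := abs_le_mul_sq_add_mul hab m
  hm.trans (le_mul_of_one_le_left ((abs_nonneg m).trans hm) hj)

theorem card_filter_Icc_eq_card {f : ℤ → ℤ} (hf : ∀ m, |m| ≤ f m) (n : ℤ) :
    ((Finset.Icc (-n) n).filter fun m => f m = n).card = Nat.card {m // f m = n} := by
  rw [← Nat.card_eq_finsetCard]
  refine Nat.card_congr (Equiv.subtypeEquivRight fun m => ?_)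
  simp only [Finset.mem_filter, Finset.mem_Icc, and_iff_right_iff_imp]
  intro hm
  exact abs_le.mp (hm ▸ hf m)

theorem finite_subtype_of_abs_le {f : ℤ → ℤ} (hf : ∀ m, |m| ≤ f m) (n : ℤ) :
    Finite {m // f m = n} :=
  (Set.finite_Icc (-n) n |>.subset fun m (hm : f m = n) => abs_le.mp (hm ▸ hf m)).to_subtype

theorem phi_eq_thetaSeries {j : ℕ} (hj : 0 < j) : phi j = thetaSeries fun m => j * m ^ 2 := by
  ext n
  rw [phi, thetaSeries, coeff_mk, coeff_mk, card_filter_Icc_eq_card fun m => ?_]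
  simpa using abs_le_mul_mul_sq_add_mul (a := 1) (b := 0) (by omega) (by simp) m

theorem Dth_eq_thetaSeries {j : ℕ} (hj : 0 < j) :
    Dth j = thetaSeries fun m => j * (5 * m ^ 2 + 2 * m) := by
  ext n
  rw [Dth, thetaSeries, coeff_mk, coeff_mk,
    card_filter_Icc_eq_card (abs_le_mul_mul_sq_add_mul (by omega) (by norm_num))]

theorem Eth_eq_thetaSeries {j : ℕ} (hj : 0 < j) :
    Eth j = thetaSeries fun m => j * (5 * m ^ 2 + 4 * m) := by
  ext n
  rw [Eth, thetaSeries, coeff_mk, coeff_mk,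
    card_filter_Icc_eq_card (abs_le_mul_mul_sq_add_mul (by omega) (by norm_num))]

theorem X_pow_mul_thetaSeries {f : ℤ → ℤ} (hf : ∀ m, 0 ≤ f m) (c : ℕ) :
    X ^ c * thetaSeries f = thetaSeries fun m => f m + c := by
  ext n
  rw [coeff_X_pow_mul']
  simp only [thetaSeries, coeff_mk]
  split_ifs with hcn
  · exact congrArg _ (Nat.card_congr (Equiv.subtypeEquivRight fun m => by omega))
  · have : IsEmpty {m // f m + c = n} := ⟨fun ⟨m, hm⟩ => by have := hf m; omega⟩
    simp

theorem Int.card_subtype_eq_sum_residues (d : ℕ) [NeZero d] {P : ℤ → Prop}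
    [Finite {m // P m}] :
    Nat.card {m // P m} = ∑ r : Fin d, Nat.card {k // P (k * d + r)} := by
  have : ∀ r : Fin d, Finite {k // P (k * d + r)} := fun r =>
    Finite.of_injective (fun k => (⟨k.1 * d + r, k.2⟩ : {m // P m})) fun a b h => by
      simp only [Subtype.mk.injEq, add_left_inj] at h
      exact Subtype.ext (mul_right_cancel₀ (by exact_mod_cast NeZero.ne d) h)
  calc Nat.card {m // P m}
      = Nat.card {x : Fin d × ℤ // P (x.2 * d + x.1)} :=
        Nat.card_congr (((Int.divModEquiv d).trans (Equiv.prodComm _ _)).subtypeEquiv fun m => by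
          conv_lhs => rw [← (Int.divModEquiv d).symm_apply_apply m]
          rfl)
    _ = Nat.card (Σ r : Fin d, {k // P (k * d + r)}) :=
        Nat.card_congr (Equiv.subtypeProdEquivSigmaSubtype fun (r : Fin d) (k : ℤ) => P (k * d + r))
    _ = ∑ r : Fin d, Nat.card {k // P (k * d + r)} := Nat.card_sigma

theorem Int.card_subtype_mul_add_eq_of_neg_iff {P : ℤ → Prop} (hP : ∀ m, P (-m) ↔ P m)
    {d r s : ℤ} (hrs : r + s = d) :
    Nat.card {k // P (k * d + r)} = Nat.card {k // P (k * d + s)} :=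
  Nat.card_congr <| (Equiv.subLeft (-1)).subtypeEquiv fun k => by
    rw [← hP, show -(k * d + r) = (-1 - k) * d + s by linear_combination -hrs]
    rfl

theorem card_sq_eq_five_dissection (n : ℤ) :
    Nat.card {m : ℤ // m ^ 2 = n} = Nat.card {m : ℤ // 25 * m ^ 2 = n}
      + 2 * Nat.card {m : ℤ // 5 * (5 * m ^ 2 + 2 * m) + 1 = n}
      + 2 * Nat.card {m : ℤ // 5 * (5 * m ^ 2 + 4 * m) + 4 = n} := by
  have : Finite {m : ℤ // m ^ 2 = n} := finite_subtype_of_abs_le (fun m => by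
    simpa using abs_le_mul_sq_add_mul (a := 1) (b := 0) (by simp) m) n
  have hsq : ∀ m : ℤ, (-m) ^ 2 = n ↔ m ^ 2 = n := by simp
  have h41 := Int.card_subtype_mul_add_eq_of_neg_iff (P := (· ^ 2 = n)) hsq
    (show (4 : ℤ) + 1 = 5 by norm_num)
  have h32 := Int.card_subtype_mul_add_eq_of_neg_iff (P := (· ^ 2 = n)) hsq
    (show (3 : ℤ) + 2 = 5 by norm_num)
  rw [Int.card_subtype_eq_sum_residues 5, Fin.sum_univ_five]
  simp only [Fin.isValue, Fin.coe_ofNat_eq_mod, Nat.reduceMod, Nat.cast_ofNat, Nat.cast_zero,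
    Nat.cast_one, add_zero, h41, h32]
  simp only [show ∀ k : ℤ, (k * 5) ^ 2 = 25 * k ^ 2 by intro k; ring,
    show ∀ k : ℤ, (k * 5 + 1) ^ 2 = 5 * (5 * k ^ 2 + 2 * k) + 1 by intro k; ring,
    show ∀ k : ℤ, (k * 5 + 2) ^ 2 = 5 * (5 * k ^ 2 + 4 * k) + 4 by intro k; ring]
  ring

/-- $\varphi(q) = \varphi(q^{25}) + 2q D(q^5) + 2q^4 E(q^5)$. -/
theorem phi_five_dissection :
    phi 1 = phi 25 + 2 * PowerSeries.X * Dth 5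
      + 2 * PowerSeries.X ^ 4 * Eth 5 := by
  have hD : ∀ m : ℤ, 0 ≤ ((5 : ℕ) : ℤ) * (5 * m ^ 2 + 2 * m) := fun m =>
    (abs_nonneg m).trans (abs_le_mul_mul_sq_add_mul (by norm_num) (by norm_num) m)
  have hE : ∀ m : ℤ, 0 ≤ ((5 : ℕ) : ℤ) * (5 * m ^ 2 + 4 * m) := fun m =>
    (abs_nonneg m).trans (abs_le_mul_mul_sq_add_mul (by norm_num) (by norm_num) m)
  rw [phi_eq_thetaSeries one_pos, phi_eq_thetaSeries (by norm_num),
    Dth_eq_thetaSeries (by norm_num), Eth_eq_thetaSeries (by norm_num), mul_assoc, mul_assoc,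
    X_pow_mul_thetaSeries hE, ← pow_one (X : ℚ⟦X⟧), X_pow_mul_thetaSeries hD, two_mul, two_mul]
  ext n
  simp only [thetaSeries, map_add, coeff_mk, Nat.cast_one, Nat.cast_ofNat, one_mul]
  rw [card_sq_eq_five_dissection n]
  push_cast
  ring
end

section
/- As formal power series over ℤ, (−q; −q)_∞ = f₂³ / (f₁ f₄), where (−q;−q)_∞ = ∏_{k≥1}(1 − (−q)ᵏ). -/
open PowerSeries

/-- `fZ m = ∏_{k ≥ 1} (1 - q^{m k})` as a formal power series over ℤ. -/
noncomputable def fZ (m : ℕ) : PowerSeries ℤ :=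
  PowerSeries.mk fun n => PowerSeries.coeff (R := ℤ) n
    (∏ k ∈ Finset.range (n + 1), (1 - (PowerSeries.X : PowerSeries ℤ) ^ (m * (k + 1))))

/-- `(-q; -q)_∞ = ∏_{k ≥ 1} (1 - (-q)^k)` over ℤ. -/
noncomputable def negq : PowerSeries ℤ :=
  PowerSeries.mk fun n => PowerSeries.coeff (R := ℤ) n
    (∏ k ∈ Finset.range (n + 1), (1 - (-(PowerSeries.X : PowerSeries ℤ)) ^ (k + 1)))

/-!
Splitting the factors by parity, `(-q;-q)_∞ = f₂ · ∏ (1 + q^{2k+1})` and `f₁ = f₂ · ∏ (1 - q^{2k+1})`,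
while `∏ (1 + q^{2k+1})(1 - q^{2k+1}) = ∏ (1 - q^{4k+2}) = f₂ / f₄`; hence `(-q;-q)_∞ f₁ f₄ = f₂³`.
This already holds for the partial products (over `k < 2M`, and `k < M` for `f₄`), and in the
coefficientwise topology the partial products converge to the series defined coefficientwise,
because the `N`-th factor only changes coefficients of degree `> N`.
-/

open Finset Filter Topology
open PowerSeries.WithPiTopology

section PartialProducts

variable {R : Type*} [CommRing R] {g : ℕ → R⟦X⟧}

theorem coeff_prod_range_one_sub_of_lt (hg : ∀ k, X ^ (k + 1) ∣ g k) {n N : ℕ} (hN : n < N) :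
    coeff n (∏ k ∈ range N, (1 - g k)) = coeff n (∏ k ∈ range (n + 1), (1 - g k)) := by
  induction N, hN using Nat.le_induction with
  | base => rfl
  | succ N hnN ih =>
    have hdvd : X ^ (N + 1) ∣ (∏ k ∈ range N, (1 - g k)) * g N := dvd_mul_of_dvd_right (hg N) _
    rw [prod_range_succ, mul_sub, mul_one, map_sub, X_pow_dvd_iff.mp hdvd n (by omega), sub_zero,
      ih]

theorem tendsto_prod_range_one_sub [TopologicalSpace R] (hg : ∀ k, X ^ (k + 1) ∣ g k) :
    Tendsto (fun N ↦ ∏ k ∈ range N, (1 - g k)) atTop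
      (𝓝 (mk fun n ↦ coeff n (∏ k ∈ range (n + 1), (1 - g k)))) := by
  rw [tendsto_iff_coeff_tendsto]
  intro n
  rw [coeff_mk]
  exact tendsto_const_nhds.congr' <| eventually_atTop.mpr
    ⟨n + 1, fun N hN ↦ (coeff_prod_range_one_sub_of_lt hg hN).symm⟩

end PartialProducts

theorem eta_quotient_partial_products {R : Type*} [CommRing R] (x : R) (M : ℕ) :
    (∏ k ∈ range (2 * M), (1 - (-x) ^ (k + 1))) * ((∏ k ∈ range (2 * M), (1 - x ^ (k + 1))) *
        ∏ k ∈ range M, (1 - x ^ (4 * (k + 1)))) =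
      (∏ k ∈ range M, (1 - x ^ (2 * (k + 1)))) ^ 2 *
        ∏ k ∈ range (2 * M), (1 - x ^ (2 * (k + 1))) := by
  induction M with
  | zero => simp
  | succ M ih =>
    rw [show 2 * (M + 1) = 2 * M + 1 + 1 by ring]
    simp only [prod_range_succ]
    rw [Odd.neg_pow ⟨M, rfl⟩, Even.neg_pow ⟨M + 1, by ring⟩]
    linear_combination
      (1 - x ^ (2 * M + 2)) ^ 2 * (1 - x ^ (4 * M + 2)) * (1 - x ^ (4 * M + 4)) * ih

theorem tendsto_fZ {m : ℕ} (hm : 0 < m) :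
    Tendsto (fun N ↦ ∏ k ∈ range N, (1 - X ^ (m * (k + 1)) : ℤ⟦X⟧)) atTop (𝓝 (fZ m)) :=
  tendsto_prod_range_one_sub fun k ↦ pow_dvd_pow X (Nat.le_mul_of_pos_left (k + 1) hm)

theorem tendsto_negq :
    Tendsto (fun N ↦ ∏ k ∈ range N, (1 - (-X) ^ (k + 1) : ℤ⟦X⟧)) atTop (𝓝 negq) :=
  tendsto_prod_range_one_sub fun k ↦ by rw [neg_pow]; exact dvd_mul_left _ _

theorem constantCoeff_fZ {m : ℕ} (hm : 0 < m) : constantCoeff (fZ m) = 1 := by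
  rw [← coeff_zero_eq_constantCoeff_apply, fZ, coeff_mk]
  simp [hm.ne']

theorem negq_mul_fZ_one_mul_fZ_four : negq * (fZ 1 * fZ 4) = fZ 2 ^ 3 := by
  have h2M : Tendsto (fun M : ℕ ↦ 2 * M) atTop atTop := tendsto_id.const_mul_atTop' two_pos
  have hlhs := (tendsto_negq.comp h2M).mul
    (((tendsto_fZ one_pos).comp h2M).mul (tendsto_fZ four_pos))
  have hrhs := ((tendsto_fZ two_pos).pow 2).mul ((tendsto_fZ two_pos).comp h2M)
  rw [pow_succ]
  refine tendsto_nhds_unique hlhs (hrhs.congr fun M ↦ ?_)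
  simpa only [Function.comp_apply, one_mul] using
    (eta_quotient_partial_products (X : ℤ⟦X⟧) M).symm

/-- \$(-q;-q)_\infty = f_2^3/(f_1 f_4)\$ over ℤ; since `f_1 f_4` has constant
term 1 it is a unit and `Ring.inverse` gives its genuine inverse. -/
theorem negq_eta_quotient :
    negq = (fZ 2) ^ 3 * Ring.inverse (fZ 1 * fZ 4) := by
  have hunit : IsUnit (fZ 1 * fZ 4) := by
    simp [isUnit_iff_constantCoeff, constantCoeff_fZ]
  rw [Ring.eq_mul_inverse_iff_mul_eq _ _ _ hunit, negq_mul_fZ_one_mul_fZ_four]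
end
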